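/- arXiv:1701.01227 — 6 statements merged into one kernel-verified Lean document; each statement's English description precedes it below -/
import Mathlib

section
/- Let (A, f) be a (2,1):1 structure and let c be a periodic element (f^[K](c) = c for some K > 0) that has two distinct preimages x₁ and x₂ under f. Then exactly one of x₁, x₂ is periodic, and the trees tree(x₁) = {a : ∃ n, f^[n](a) = x₁} and tree(x₂) = {a : ∃ n, f^[n](a) = x₂} are not equal; moreover, the tree of the periodic preimage contains a periodic point while the tree of the non-periodic preimage contains no periodic point. -/
/-!
`f` maps the set of periodic points bijectively onto itself, so the periodic point `c` has
exactly one periodic preimage; as the fiber of `c` is `{x₁, x₂}`, it is one of them. The other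
is not periodic, and neither is anything in its tree, since periodicity passes to forward
iterates.
-/

open Function Set

namespace Function

variable {A : Type*} {f : A → A}

def tree (f : A → A) (x : A) : Set A := {a | ∃ n, f^[n] a = x}

lemma self_mem_tree (x : A) : x ∈ tree f x := ⟨0, rfl⟩

lemma iterate_mem_periodicPts {a : A} (ha : a ∈ periodicPts f) (n : ℕ) :
    f^[n] a ∈ periodicPts f :=
  let ⟨m, hm, hma⟩ := ha
  ⟨m, hm, hma.apply_iterate n⟩

lemma notMem_periodicPts_of_mem_tree {x a : A} (hx : x ∉ periodicPts f) (ha : a ∈ tree f x) :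
    a ∉ periodicPts f := by
  obtain ⟨n, rfl⟩ := ha
  exact fun hper ↦ hx (iterate_mem_periodicPts hper n)

lemma tree_ne_of_mem_periodicPts_of_notMem {y z : A} (hy : y ∈ periodicPts f)
    (hz : z ∉ periodicPts f) : tree f y ≠ tree f z := fun h ↦
  notMem_periodicPts_of_mem_tree hz (h ▸ self_mem_tree y) hy

lemma notMem_periodicPts_of_apply_eq {y z : A} (hy : y ∈ periodicPts f) (hyz : y ≠ z)
    (h : f y = f z) : z ∉ periodicPts f :=
  fun hz ↦ hyz ((bijOn_periodicPts f).injOn hy hz h)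

lemma preimage_singleton_eq_pair {c x₁ x₂ : A}
    (hfib : (f ⁻¹' {c}).ncard = 1 ∨ (f ⁻¹' {c}).ncard = 2)
    (hx : x₁ ≠ x₂) (h₁ : f x₁ = c) (h₂ : f x₂ = c) : f ⁻¹' {c} = {x₁, x₂} := by
  have hfin : (f ⁻¹' {c}).Finite := finite_of_ncard_ne_zero (by omega)
  refine (eq_of_subset_of_ncard_le ?_ ?_ hfin).symm
  · simp [pair_subset_iff, h₁, h₂]
  · rw [ncard_pair hx]
    omega

end Function

/-- If a periodic element `c` of a (2,1):1 structure has two distinct preimages,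
then exactly one of them is periodic, their trees differ, and the tree of the
periodic preimage contains a periodic point while the tree of the non-periodic
preimage contains none. -/
theorem stmt_7 {A : Type*} (f : A → A)
    (hfib : ∀ a : A, (f ⁻¹' {a}).ncard = 1 ∨ (f ⁻¹' {a}).ncard = 2)
    (c x₁ x₂ : A) (K : ℕ) (hK : 0 < K) (hc : f^[K] c = c)
    (hx : x₁ ≠ x₂) (h1 : f x₁ = c) (h2 : f x₂ = c) :
    (Xor' (∃ n : ℕ, 0 < n ∧ f^[n] x₁ = x₁) (∃ n : ℕ, 0 < n ∧ f^[n] x₂ = x₂)) ∧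
    {a : A | ∃ n : ℕ, f^[n] a = x₁} ≠ {a : A | ∃ n : ℕ, f^[n] a = x₂} ∧
    ((∃ n : ℕ, 0 < n ∧ f^[n] x₁ = x₁) →
      (∃ a ∈ {a : A | ∃ n : ℕ, f^[n] a = x₁}, ∃ n : ℕ, 0 < n ∧ f^[n] a = a) ∧
      (∀ a ∈ {a : A | ∃ n : ℕ, f^[n] a = x₂}, ∀ n : ℕ, 0 < n → f^[n] a ≠ a)) ∧
    ((∃ n : ℕ, 0 < n ∧ f^[n] x₂ = x₂) →
      (∃ a ∈ {a : A | ∃ n : ℕ, f^[n] a = x₂}, ∃ n : ℕ, 0 < n ∧ f^[n] a = a) ∧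
      (∀ a ∈ {a : A | ∃ n : ℕ, f^[n] a = x₁}, ∀ n : ℕ, 0 < n → f^[n] a ≠ a)) := by
  obtain ⟨p, hp, hpc⟩ := (bijOn_periodicPts f).surjOn ⟨K, hK, hc⟩
  have hp_mem : p ∈ ({x₁, x₂} : Set A) := preimage_singleton_eq_pair (hfib c) hx h1 h2 ▸ hpc
  have no_periodic_tree {z : A} (hz : z ∉ periodicPts f) :
      ∀ a ∈ tree f z, ∀ n, 0 < n → f^[n] a ≠ a :=
    fun a ha n hn han ↦ notMem_periodicPts_of_mem_tree hz ha ⟨n, hn, han⟩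
  rcases hp_mem with rfl | rfl
  · have hnp₂ : x₂ ∉ periodicPts f := notMem_periodicPts_of_apply_eq hp hx (h1.trans h2.symm)
    exact ⟨Or.inl ⟨hp, hnp₂⟩, tree_ne_of_mem_periodicPts_of_notMem hp hnp₂,
      fun _ ↦ ⟨⟨p, self_mem_tree p, hp⟩, no_periodic_tree hnp₂⟩, fun h ↦ absurd h hnp₂⟩
  · have hnp₁ : x₁ ∉ periodicPts f := notMem_periodicPts_of_apply_eq hp hx.symm (h2.trans h1.symm)
    exact ⟨Or.inr ⟨hp, hnp₁⟩, (tree_ne_of_mem_periodicPts_of_notMem hp hnp₁).symm,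
      fun h ↦ absurd h hnp₁, fun _ ↦ ⟨⟨p, self_mem_tree p, hp⟩, no_periodic_tree hnp₁⟩⟩
end

section
/- There exists a computable function f : ℕ → ℕ such that every fiber f⁻¹({x}) has cardinality 1 or 2, but the set Λ = {x : ∃ x₁ x₂, x₁ ≠ x₂ ∧ f(x₁) = x ∧ f(x₂) = x} of elements with two preimages is not computable. -/
/-!
Halving the even numbers gives every value `v` the preimage `2v`; each odd number supplies at
most one further preimage. Enumerate the halting set without repetition by letting `k = ⟪x, s⟫`
stand for "program `x` is first seen to halt at stage `s + 1`", and send `2k + 1` to `2x + 1` in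
that case and to `2k` otherwise. Then `2x + 1` has two preimages exactly when `x` halts, so
deciding which values have two preimages would decide the halting problem.
-/

open Nat.Partrec

theorem ComputablePred.comp {α β : Type*} [Primcodable α] [Primcodable β] {p : β → Prop}
    {f : α → β} (hp : ComputablePred p) (hf : Computable f) :
    ComputablePred fun a => p (f a) := by
  obtain ⟨_, hp⟩ := hp
  exact ⟨fun _ => inferInstance, hp.comp hf⟩

def HasTwoPreimages (f : ℕ → ℕ) (v : ℕ) : Prop :=
  ∃ x₁ x₂ : ℕ, x₁ ≠ x₂ ∧ f x₁ = v ∧ f x₂ = v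

section HalvingOnEvens

variable {f : ℕ → ℕ}

theorem preimage_singleton_eq_pair (heven : ∀ k, f (2 * k) = k)
    (hodd : Function.Injective fun k => f (2 * k + 1)) {v k : ℕ} (hk : f (2 * k + 1) = v) :
    f ⁻¹' {v} = {2 * v, 2 * k + 1} := by
  ext y
  obtain ⟨m, rfl | rfl⟩ := Nat.even_or_odd' y
  · simp only [Set.mem_preimage, heven, Set.mem_singleton_iff, Set.mem_insert_iff]
    omega
  · simp only [Set.mem_preimage, Set.mem_singleton_iff, Set.mem_insert_iff]
    constructor
    · exact fun hm => Or.inr (congrArg (2 * · + 1) (hodd (hm.trans hk.symm)))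
    · rintro (h | h)
      · omega
      · obtain rfl : m = k := by omega
        exact hk

theorem preimage_singleton_eq_singleton (heven : ∀ k, f (2 * k) = k) {v : ℕ}
    (hv : ∀ k, f (2 * k + 1) ≠ v) : f ⁻¹' {v} = {2 * v} := by
  ext y
  obtain ⟨m, rfl | rfl⟩ := Nat.even_or_odd' y
  · simp only [Set.mem_preimage, heven, Set.mem_singleton_iff]
    omega
  · simp only [Set.mem_preimage, Set.mem_singleton_iff, hv, false_iff]
    omega

theorem ncard_preimage_singleton_eq_one_or_two (heven : ∀ k, f (2 * k) = k)
    (hodd : Function.Injective fun k => f (2 * k + 1)) (v : ℕ) :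
    (f ⁻¹' {v}).ncard = 1 ∨ (f ⁻¹' {v}).ncard = 2 := by
  by_cases hv : ∃ k, f (2 * k + 1) = v
  · obtain ⟨k, hk⟩ := hv
    right
    rw [preimage_singleton_eq_pair heven hodd hk, Set.ncard_pair (by omega)]
  · left
    rw [preimage_singleton_eq_singleton heven (not_exists.mp hv), Set.ncard_singleton]

theorem hasTwoPreimages_iff (heven : ∀ k, f (2 * k) = k) {v : ℕ} :
    HasTwoPreimages f v ↔ ∃ k, f (2 * k + 1) = v := by
  constructor
  · rintro ⟨x₁, x₂, hne, h₁, h₂⟩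
    obtain ⟨k₁, rfl | rfl⟩ := Nat.even_or_odd' x₁ <;>
      obtain ⟨k₂, rfl | rfl⟩ := Nat.even_or_odd' x₂
    · rw [heven] at h₁ h₂
      omega
    exacts [⟨k₂, h₂⟩, ⟨k₁, h₁⟩, ⟨k₁, h₁⟩]
  · rintro ⟨k, hk⟩
    exact ⟨2 * v, 2 * k + 1, by omega, heven v, hk⟩

end HalvingOnEvens

def twoOneOfEnum (g : ℕ → Option ℕ) (n : ℕ) : ℕ :=
  if n % 2 = 0 then n / 2 else ((g (n / 2)).map fun x => 2 * x + 1).getD (2 * (n / 2))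

section TwoOneOfEnum

variable {g : ℕ → Option ℕ}

theorem twoOneOfEnum_two_mul (g : ℕ → Option ℕ) (k : ℕ) : twoOneOfEnum g (2 * k) = k := by
  simp [twoOneOfEnum]

theorem twoOneOfEnum_two_mul_add_one_eq_two_mul_add_one_iff {k x : ℕ} :
    twoOneOfEnum g (2 * k + 1) = 2 * x + 1 ↔ g k = some x := by
  have hk : (2 * k + 1) / 2 = k := by omega
  cases hg : g k <;> simp [twoOneOfEnum, hk, hg]
  omega

theorem injective_twoOneOfEnum_two_mul_add_one
    (hg : ∀ {a b x}, g a = some x → g b = some x → a = b) :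
    Function.Injective fun k => twoOneOfEnum g (2 * k + 1) := by
  intro a b hab
  have hk : ∀ k, (2 * k + 1) / 2 = k := by omega
  simp only [twoOneOfEnum, hk] at hab
  cases ha : g a <;> cases hb : g b <;> simp [ha, hb] at hab <;>
    first | omega | exact hg ha (hab ▸ hb)

theorem Primrec.twoOneOfEnum (hg : Primrec g) : Primrec (twoOneOfEnum g) := by
  have half : Primrec fun n : ℕ => n / 2 := Primrec.nat_div.comp .id (.const 2)
  refine Primrec.ite (Primrec.eq.comp (Primrec.nat_mod.comp .id (.const 2)) (.const 0))
    half ?_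
  exact Primrec.option_getD.comp
    (Primrec.option_map (hg.comp half)
      (Primrec.succ.comp (Primrec.nat_mul.comp (.const 2) .snd)).to₂)
    (Primrec.nat_mul.comp (.const 2) half)

theorem ComputablePred.exists_eq_some_of_twoOneOfEnum
    (h : ComputablePred (HasTwoPreimages (twoOneOfEnum g))) :
    ComputablePred fun x => ∃ k, g k = some x :=
  (h.comp (Primrec.succ.comp (Primrec.nat_mul.comp (.const 2) .id)).to_comp).of_eq fun _ => by
    simp only [hasTwoPreimages_iff (twoOneOfEnum_two_mul g),
      twoOneOfEnum_two_mul_add_one_eq_two_mul_add_one_iff, id]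

end TwoOneOfEnum

def enumOfStages (h : ℕ → ℕ → Bool) (t : ℕ) : Option ℕ :=
  bif h t.unpair.1 (t.unpair.2 + 1) && !h t.unpair.1 t.unpair.2 then some t.unpair.1 else none

section EnumOfStages

variable {h : ℕ → ℕ → Bool}

theorem enumOfStages_eq_some_iff {t x : ℕ} :
    enumOfStages h t = some x ↔
      t.unpair.1 = x ∧ h x (t.unpair.2 + 1) = true ∧ h x t.unpair.2 = false := by
  unfold enumOfStages
  by_cases hx : t.unpair.1 = x
  · subst hx
    cases h t.unpair.1 (t.unpair.2 + 1) <;> cases h t.unpair.1 t.unpair.2 <;> simp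
  · cases h t.unpair.1 (t.unpair.2 + 1) && !h t.unpair.1 t.unpair.2 <;> simp [hx]

theorem enumOfStages_injective (hmono : ∀ x, Monotone (h x)) {a b x : ℕ}
    (ha : enumOfStages h a = some x) (hb : enumOfStages h b = some x) : a = b := by
  rw [enumOfStages_eq_some_iff] at ha hb
  have entry_le {s s' : ℕ} (hs : h x (s + 1) = true) (hs' : h x s' = false) : s' ≤ s := by
    by_contra! hlt
    exact absurd (hmono x (Nat.succ_le_of_lt hlt)) (by simp [hs, hs'])
  have hst : a.unpair.2 = b.unpair.2 :=
    le_antisymm (entry_le hb.2.1 ha.2.2) (entry_le ha.2.1 hb.2.2)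
  rw [← Nat.pair_unpair a, ← Nat.pair_unpair b, ha.1, hb.1, hst]

theorem exists_enumOfStages_eq_some_iff (hzero : ∀ x, h x 0 = false) {x : ℕ} :
    (∃ t, enumOfStages h t = some x) ↔ ∃ s, h x s = true := by
  simp only [enumOfStages_eq_some_iff]
  constructor
  · rintro ⟨t, -, hs, -⟩
    exact ⟨_, hs⟩
  · intro hex
    obtain ⟨s, hs⟩ : ∃ s, Nat.find hex = s + 1 :=
      Nat.exists_eq_add_one.mpr (Nat.pos_of_ne_zero fun h0 => by
        simpa [h0, hzero] using Nat.find_spec hex)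
    refine ⟨Nat.pair x s, by simp, by simpa [← hs] using Nat.find_spec hex, ?_⟩
    simpa using Nat.find_min hex (hs ▸ Nat.lt_succ_self s)

theorem Primrec.enumOfStages (hh : Primrec₂ h) : Primrec (enumOfStages h) := by
  have hx : Primrec fun t : ℕ => t.unpair.1 := Primrec.fst.comp Primrec.unpair
  have hs : Primrec fun t : ℕ => t.unpair.2 := Primrec.snd.comp Primrec.unpair
  exact Primrec.cond
    (Primrec.and.comp (hh.comp hx (Primrec.succ.comp hs)) (Primrec.not.comp (hh.comp hx hs)))
    (Primrec.option_some.comp hx) (.const none)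

end EnumOfStages

def haltsWithin (c s : ℕ) : Bool :=
  (Code.evaln s (Denumerable.ofNat Code c) 0).isSome

theorem primrec₂_haltsWithin : Primrec₂ haltsWithin :=
  Primrec.option_isSome.comp
    (Code.primrec_evaln.comp ((Primrec.snd.pair ((Primrec.ofNat _).comp .fst)).pair (.const 0)))

theorem monotone_haltsWithin (c : ℕ) : Monotone (haltsWithin c) := by
  intro s s' hle
  cases hs : haltsWithin c s
  · exact Bool.false_le _
  · obtain ⟨y, hy⟩ := Option.isSome_iff_exists.mp hs
    exact le_of_eq (Option.isSome_iff_exists.mpr ⟨y, Code.evaln_mono hle hy⟩).symm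

theorem haltsWithin_zero (c : ℕ) : haltsWithin c 0 = false := by
  simp [haltsWithin, Code.evaln]

theorem exists_haltsWithin_iff (c : Code) :
    (∃ s, haltsWithin (Encodable.encode c) s = true) ↔ (c.eval 0).Dom := by
  simp only [haltsWithin, Denumerable.ofNat_encode, Option.isSome_iff_exists, Part.dom_iff_mem,
    Code.evaln_complete]
  exact ⟨fun ⟨s, y, hy⟩ => ⟨y, s, hy⟩, fun ⟨y, s, hy⟩ => ⟨s, y, hy⟩⟩

theorem not_computablePred_exists_haltsWithin :
    ¬ ComputablePred fun c => ∃ s, haltsWithin c s = true := fun h =>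
  ComputablePred.halting_problem 0 ((h.comp Computable.encode).of_eq exists_haltsWithin_iff)

/-- There is a computable (2,1):1 structure whose branching function (equivalently,
whose split hair set) is not computable. -/
theorem stmt_10 :
    ∃ f : ℕ → ℕ, Computable f ∧
      (∀ x : ℕ, (f ⁻¹' {x}).ncard = 1 ∨ (f ⁻¹' {x}).ncard = 2) ∧
      ¬ ComputablePred fun x : ℕ => ∃ x₁ x₂ : ℕ, x₁ ≠ x₂ ∧ f x₁ = x ∧ f x₂ = x := by
  set g := enumOfStages haltsWithin
  have computable : Computable (twoOneOfEnum g) :=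
    (Primrec.twoOneOfEnum (Primrec.enumOfStages primrec₂_haltsWithin)).to_comp
  have fibers := ncard_preimage_singleton_eq_one_or_two (twoOneOfEnum_two_mul g)
    (injective_twoOneOfEnum_two_mul_add_one (enumOfStages_injective monotone_haltsWithin))
  refine ⟨twoOneOfEnum g, computable, fibers, fun h => ?_⟩
  exact not_computablePred_exists_haltsWithin
    ((ComputablePred.exists_eq_some_of_twoOneOfEnum h).of_eq fun _ =>
      exists_enumOfStages_eq_some_iff haltsWithin_zero)
end

section
/- There exists a computable function f : ℕ → ℕ with all fibers of size 1 or 2 such that the split hair set Λ = {x : |f⁻¹(x)| = 2} is computably enumerable but not computable, and moreover f(x) = x for exactly one x (the structure is a single 1-cycle, i.e., f has exactly one fixed point and every element eventually maps to it). -/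
open Nat.Partrec (Code)

namespace Stmt11

/-- Stage-`s` halting check for code `x` on input `0`. -/
def Tb (x s : ℕ) : Bool := (Nat.Partrec.Code.evaln s (Denumerable.ofNat Code x) 0).isSome

/-- Bounded existential: some stage below `t` succeeds. -/
def Eb (x t : ℕ) : Bool := Nat.rec false (fun s ih => ih || Tb x s) t

/-- `t` is the minimal witness stage for `x`. -/
def Wb (x t : ℕ) : Bool := Tb x t && !(Eb x t)

/-- hair node code -/
def hair (x t : ℕ) : ℕ := 2 * Nat.pair x t + 1

/-- The function of the (2,1):1 structure. -/
def f (n : ℕ) : ℕ :=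
  if n % 2 = 0 then n - 2
  else
    bif Wb (Nat.unpair (n / 2)).1 (Nat.unpair (n / 2)).2 then
      4 * (Nat.unpair (n / 2)).1 + 4
    else bif Eb (Nat.unpair (n / 2)).1 (Nat.unpair (n / 2)).2 then
      (if 2 ≤ (Nat.unpair (n / 2)).2 then
        hair (Nat.unpair (n / 2)).1 ((Nat.unpair (n / 2)).2 - 2)
      else 4 * (Nat.unpair (n / 2)).1 + 2)
    else
      (if 1 ≤ (Nat.unpair (n / 2)).2 then
        hair (Nat.unpair (n / 2)).1 ((Nat.unpair (n / 2)).2 - 1)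
      else 4 * (Nat.unpair (n / 2)).1 + 2)

lemma Eb_zero (x : ℕ) : Eb x 0 = false := rfl

lemma Eb_succ (x t : ℕ) : Eb x (t + 1) = (Eb x t || Tb x t) := rfl

lemma Eb_iff (x t : ℕ) : Eb x t = true ↔ ∃ s < t, Tb x s = true := by
  induction t with
  | zero => simp [Eb_zero]
  | succ t ih =>
    rw [Eb_succ, Bool.or_eq_true, ih]
    constructor
    · rintro (⟨s, hs, h⟩ | h)
      · exact ⟨s, by omega, h⟩
      · exact ⟨t, by omega, h⟩
    · rintro ⟨s, hs, h⟩
      rcases Nat.lt_succ_iff_lt_or_eq.1 hs with h' | rfl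
      · exact Or.inl ⟨s, h', h⟩
      · exact Or.inr h

lemma Wb_unique {x s t : ℕ} (hs : Wb x s = true) (ht : Wb x t = true) : s = t := by
  unfold Wb at hs ht
  simp only [Bool.and_eq_true, Bool.not_eq_true'] at hs ht
  by_contra hne
  rcases Nat.lt_or_ge s t with h | h
  · exact absurd ((Eb_iff x t).2 ⟨s, h, hs.1⟩) (by simp [ht.2])
  · have : s ≠ t := hne
    have h' : t < s := by omega
    exact absurd ((Eb_iff x s).2 ⟨t, h', ht.1⟩) (by simp [hs.2])

lemma Wb_exists {x : ℕ} (h : ∃ s, Tb x s = true) : ∃ s, Wb x s = true := by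
  classical
  refine ⟨Nat.find h, ?_⟩
  unfold Wb
  simp only [Bool.and_eq_true, Bool.not_eq_true']
  refine ⟨Nat.find_spec h, ?_⟩
  rw [Bool.eq_false_iff]
  intro hE
  obtain ⟨s, hs, hT⟩ := (Eb_iff _ _).1 hE
  exact absurd hT (by simpa using Nat.find_min h hs)

lemma Wb_Tb {x s : ℕ} (h : Wb x s = true) : Tb x s = true := by
  unfold Wb at h; simp only [Bool.and_eq_true] at h; exact h.1

lemma f_even {n : ℕ} (h : n % 2 = 0) : f n = n - 2 := by
  unfold f; rw [if_pos h]

lemma hair_odd (x t : ℕ) : hair x t % 2 = 1 := by unfold hair; omega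

lemma hair_div (x t : ℕ) : hair x t / 2 = Nat.pair x t := by unfold hair; omega

lemma hair_inj {x t y u : ℕ} (h : hair x t = hair y u) : x = y ∧ t = u := by
  unfold hair at h
  have : Nat.pair x t = Nat.pair y u := by omega
  exact Nat.pair_eq_pair.1 this

lemma f_hair (x t : ℕ) : f (hair x t) =
    (bif Wb x t then 4 * x + 4
    else bif Eb x t then (if 2 ≤ t then hair x (t - 2) else 4 * x + 2)
    else (if 1 ≤ t then hair x (t - 1) else 4 * x + 2)) := by
  unfold f
  rw [if_neg (by rw [hair_odd]; omega)]
  rw [hair_div, Nat.unpair_pair]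

lemma rep (n : ℕ) : n % 2 = 0 ∨ ∃ x t, n = hair x t := by
  rcases Nat.even_or_odd n with h | h
  · exact Or.inl (Nat.even_iff.1 h)
  · refine Or.inr ⟨(Nat.unpair (n / 2)).1, (Nat.unpair (n / 2)).2, ?_⟩
    unfold hair
    rw [Nat.pair_unpair]
    have := Nat.odd_iff.1 h
    omega

lemma fiber_zero : f ⁻¹' {0} = {0, 2} := by
  ext n
  simp only [Set.mem_preimage, Set.mem_singleton_iff, Set.mem_insert_iff]
  constructor
  · intro h
    rcases rep n with he | ⟨x, t, rfl⟩
    · rw [f_even he] at h; omega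
    · rw [f_hair] at h
      cases hW : Wb x t <;> cases hE : Eb x t <;>
        simp only [hW, hE, cond_true, cond_false] at h <;>
        exfalso <;>
        first
          | omega
          | (split_ifs at h <;> first | omega | (unfold hair at h; omega))
  · rintro (rfl | rfl) <;> simp [f_even, Nat.mod_self]
    
lemma fiber_two (x : ℕ) :
    f ⁻¹' {4 * x + 2} = {4 * x + 4, hair x (bif Tb x 0 then 1 else 0)} := by
  ext n
  simp only [Set.mem_preimage, Set.mem_singleton_iff, Set.mem_insert_iff]
  constructor
  · intro h
    rcases rep n with he | ⟨y, t, rfl⟩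
    · rw [f_even he] at h; omega
    · rw [f_hair] at h
      cases hW : Wb y t <;> cases hE : Eb y t <;>
        simp only [hW, hE, cond_true, cond_false] at h
      · -- ¬W, ¬E
        split_ifs at h with h1
        · unfold hair at h; omega
        · have hy : x = y := by omega
          have ht : t = 0 := by omega
          subst hy; subst ht
          have hT : Tb x 0 = false := by
            have := hW; unfold Wb at this
            simpa [Eb_zero] using this
          right; rw [hT]; rfl
      · -- ¬W, E
        split_ifs at h with h1
        · unfold hair at h; omega
        · have hy : x = y := by omega
          subst hy
          interval_cases t
          · rw [Eb_zero] at hE; exact absurd hE (by simp)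
          · have hT : Tb x 0 = true := by
              have := hE; rw [Eb_succ, Eb_zero, Bool.false_or] at this
              exact this
            right; rw [hT]; rfl
      · omega
      · omega
  · rintro (rfl | rfl)
    · rw [f_even (by omega)]; omega
    · cases hT : Tb x 0 <;> simp only [cond_true, cond_false]
      · have hW : Wb x 0 = false := by unfold Wb; simp [hT]
        rw [f_hair, hW, Eb_zero]; simp
      · have hE : Eb x 1 = true := by rw [Eb_succ, Eb_zero, Bool.false_or, hT]
        have hW : Wb x 1 = false := by unfold Wb; rw [hE]; simp
        rw [f_hair, hW, hE]; simp

lemma fiber_four_notK {x : ℕ} (hK : ∀ s, Tb x s = false) :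
    f ⁻¹' {4 * x + 4} = {4 * x + 6} := by
  ext n
  simp only [Set.mem_preimage, Set.mem_singleton_iff]
  constructor
  · intro h
    rcases rep n with he | ⟨y, t, rfl⟩
    · rw [f_even he] at h; omega
    · rw [f_hair] at h
      cases hW : Wb y t <;> cases hE : Eb y t <;>
        simp only [hW, hE, cond_true, cond_false] at h
      · split_ifs at h <;> (try omega) <;> (unfold hair at h; omega)
      · split_ifs at h <;> (try omega) <;> (unfold hair at h; omega)
      all_goals {
        have hy : x = y := by omega
        subst hy
        exact absurd (Wb_Tb hW) (by simp [hK t]) }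
  · rintro rfl
    rw [f_even (by omega)]; omega

lemma fiber_four_K {x s : ℕ} (hW : Wb x s = true) :
    f ⁻¹' {4 * x + 4} = {4 * x + 6, hair x s} := by
  ext n
  simp only [Set.mem_preimage, Set.mem_singleton_iff, Set.mem_insert_iff]
  constructor
  · intro h
    rcases rep n with he | ⟨y, t, rfl⟩
    · rw [f_even he] at h; omega
    · rw [f_hair] at h
      cases hW' : Wb y t <;> cases hE : Eb y t <;>
        simp only [hW', hE, cond_true, cond_false] at h
      · split_ifs at h <;> (try omega) <;> (unfold hair at h; omega)
      · split_ifs at h <;> (try omega) <;> (unfold hair at h; omega)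
      all_goals {
        have hy : x = y := by omega
        subst hy
        right
        rw [Wb_unique hW' hW] }
  · rintro (rfl | rfl)
    · rw [f_even (by omega)]; omega
    · rw [f_hair, hW]; simp

lemma fiber_hair (x u : ℕ) : ∃ v, f ⁻¹' {hair x u} = {hair x v} := by
  have key : ∀ v, (Wb x v = false) → (Eb x v = true → 2 ≤ v ∧ v - 2 = u) →
      (Eb x v = false → 1 ≤ v ∧ v - 1 = u) → f (hair x v) = hair x u := by
    intro v h1 h2 h3
    rw [f_hair, h1, cond_false]
    cases hE : Eb x v <;> simp only [cond_true, cond_false]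
    · obtain ⟨hv, rfl⟩ := h3 hE; rw [if_pos hv]
    · obtain ⟨hv, rfl⟩ := h2 hE; rw [if_pos hv]
  have fwd : ∀ (v : ℕ), ∀ y t, f (hair y t) = hair x v →
      y = x ∧ ((Wb x t = false ∧ Eb x t = true ∧ t = v + 2) ∨
               (Wb x t = false ∧ Eb x t = false ∧ t = v + 1)) := by
    intro v y t h
    rw [f_hair] at h
    cases hW : Wb y t <;> cases hE : Eb y t <;>
      simp only [hW, hE, cond_true, cond_false] at h
    · split_ifs at h with h1
      · obtain ⟨rfl, ht⟩ := hair_inj h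
        exact ⟨rfl, Or.inr ⟨hW, hE, by omega⟩⟩
      · exfalso; unfold hair at h; omega
    · split_ifs at h with h1
      · obtain ⟨rfl, ht⟩ := hair_inj h
        exact ⟨rfl, Or.inl ⟨hW, hE, by omega⟩⟩
      · exfalso; unfold hair at h; omega
    · exfalso; unfold hair at h; omega
    · exfalso; unfold hair at h; omega
  cases hE1 : Eb x (u + 1)
  · cases hT1 : Tb x (u + 1)
    · -- no activity at u+1: predecessor is hair x (u+1)
      refine ⟨u + 1, ?_⟩
      ext n
      simp only [Set.mem_preimage, Set.mem_singleton_iff]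
      constructor
      · intro h
        rcases rep n with he | ⟨y, t, rfl⟩
        · exfalso; rw [f_even he] at h; unfold hair at h; omega
        · obtain ⟨rfl, hc⟩ := fwd u y t h
          rcases hc with ⟨_, hEt, rfl⟩ | ⟨_, _, rfl⟩
          · exfalso
            rw [Eb_succ, hE1, hT1] at hEt; simp at hEt
          · rfl
      · rintro rfl
        refine key _ ?_ (by intro hc; rw [hE1] at hc; simp at hc) (fun _ => ⟨by omega, by omega⟩)
        unfold Wb; rw [hT1]; rfl
    · -- witness exactly at u+1: predecessor is hair x (u+2)
      refine ⟨u + 2, ?_⟩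
      have hE2 : Eb x (u + 2) = true := by rw [Eb_succ, hE1, hT1]; rfl
      have hW1 : Wb x (u + 1) = true := by unfold Wb; rw [hT1, hE1]; rfl
      ext n
      simp only [Set.mem_preimage, Set.mem_singleton_iff]
      constructor
      · intro h
        rcases rep n with he | ⟨y, t, rfl⟩
        · exfalso; rw [f_even he] at h; unfold hair at h; omega
        · obtain ⟨rfl, hc⟩ := fwd u y t h
          rcases hc with ⟨_, _, rfl⟩ | ⟨hWt, _, rfl⟩
          · rfl
          · exfalso; rw [hW1] at hWt; simp at hWt
      · rintro rfl
        refine key _ ?_ (fun _ => ⟨by omega, by omega⟩) (by intro hc; rw [hE2] at hc; simp at hc)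
        unfold Wb; rw [hE2]; simp
  · -- activity strictly below u+1: predecessor is hair x (u+2)
    refine ⟨u + 2, ?_⟩
    have hE2 : Eb x (u + 2) = true := by rw [Eb_succ, hE1]; rfl
    ext n
    simp only [Set.mem_preimage, Set.mem_singleton_iff]
    constructor
    · intro h
      rcases rep n with he | ⟨y, t, rfl⟩
      · exfalso; rw [f_even he] at h; unfold hair at h; omega
      · obtain ⟨rfl, hc⟩ := fwd u y t h
        rcases hc with ⟨_, _, rfl⟩ | ⟨_, hEt, rfl⟩
        · rfl
        · exfalso; rw [hE1] at hEt; simp at hEt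
    · rintro rfl
      refine key _ ?_ (fun _ => ⟨by omega, by omega⟩) (by intro hc; rw [hE2] at hc; simp at hc)
      unfold Wb; rw [hE2]; simp

/-- The coded halting set. -/
def Kp (x : ℕ) : Prop := ∃ s, Tb x s = true

lemma hair_ne_even (x t m : ℕ) (h : m % 2 = 0) : hair x t ≠ m := by
  unfold hair; omega

lemma ncard_fiber_zero : (f ⁻¹' {0}).ncard = 2 := by
  rw [fiber_zero]; exact Set.ncard_pair (by omega)

lemma ncard_fiber_two (x : ℕ) : (f ⁻¹' {4 * x + 2}).ncard = 2 := by
  rw [fiber_two]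
  exact Set.ncard_pair (Ne.symm (hair_ne_even _ _ _ (by omega)))

lemma ncard_fiber_four (x : ℕ) :
    ((f ⁻¹' {4 * x + 4}).ncard = 2 ↔ Kp x) ∧
    ((f ⁻¹' {4 * x + 4}).ncard = 1 ∨ (f ⁻¹' {4 * x + 4}).ncard = 2) := by
  by_cases h : Kp x
  · obtain ⟨s, hW⟩ := Wb_exists h
    rw [fiber_four_K hW]
    rw [Set.ncard_pair (Ne.symm (hair_ne_even _ _ _ (by omega)))]
    exact ⟨by simpa using h, Or.inr rfl⟩
  · have hall : ∀ s, Tb x s = false := by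
      intro s
      cases hs : Tb x s
      · rfl
      · exact absurd ⟨s, hs⟩ h
    rw [fiber_four_notK hall, Set.ncard_singleton]
    exact ⟨by simpa using h, Or.inl rfl⟩

lemma ncard_fiber_hair (x u : ℕ) : (f ⁻¹' {hair x u}).ncard = 1 := by
  obtain ⟨v, hv⟩ := fiber_hair x u
  rw [hv, Set.ncard_singleton]

lemma ncard_two_iff (y : ℕ) :
    (f ⁻¹' {y}).ncard = 2 ↔
      (y = 0 ∨ y % 4 = 2 ∨ (y % 4 = 0 ∧ 0 < y ∧ Kp (y / 4 - 1))) := by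
  rcases rep y with he | ⟨a, b, rfl⟩
  · by_cases h0 : y = 0
    · subst h0; simp [ncard_fiber_zero]
    · rcases Nat.lt_or_ge (y % 4) 2 with h4 | h4
      · -- y % 4 = 0, y ≠ 0 : y = 4x+4
        have h40 : y % 4 = 0 := by omega
        have hy : y = 4 * (y / 4 - 1) + 4 := by omega
        rw [hy, (ncard_fiber_four (y / 4 - 1)).1]
        rw [← hy]
        constructor
        · intro hK; exact Or.inr (Or.inr ⟨h40, by omega, hK⟩)
        · rintro (h | h | ⟨_, _, hK⟩) <;> first | omega | exact hK
      · -- y % 4 = 2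
        have h42 : y % 4 = 2 := by omega
        have hy : y = 4 * (y / 4) + 2 := by omega
        rw [hy, ncard_fiber_two]
        simp only [true_iff]
        omega
  · rw [ncard_fiber_hair]
    have hodd : hair a b % 2 = 1 := hair_odd a b
    constructor
    · omega
    · rintro (h | h | ⟨h, _, _⟩) <;> omega

lemma ncard_one_or_two (y : ℕ) :
    (f ⁻¹' {y}).ncard = 1 ∨ (f ⁻¹' {y}).ncard = 2 := by
  rcases rep y with he | ⟨a, b, rfl⟩
  · by_cases h0 : y = 0
    · subst h0; exact Or.inr ncard_fiber_zero
    · rcases Nat.lt_or_ge (y % 4) 2 with h4 | h4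
      · have hy : y = 4 * (y / 4 - 1) + 4 := by omega
        rw [hy]; exact (ncard_fiber_four _).2
      · have hy : y = 4 * (y / 4) + 2 := by omega
        rw [hy]; exact Or.inr (ncard_fiber_two _)
  · exact Or.inl (ncard_fiber_hair a b)

/-- Termination measure. -/
def mu (n : ℕ) : ℕ :=
  if n % 2 = 0 then n / 2
  else 2 * (Nat.unpair (n / 2)).1 + 3 + (Nat.unpair (n / 2)).2

lemma mu_even {n : ℕ} (h : n % 2 = 0) : mu n = n / 2 := by unfold mu; rw [if_pos h]

lemma mu_hair (x t : ℕ) : mu (hair x t) = 2 * x + 3 + t := by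
  unfold mu
  rw [if_neg (by rw [hair_odd]; omega), hair_div, Nat.unpair_pair]

lemma mu_decr {n : ℕ} (h : n ≠ 0) : mu (f n) < mu n := by
  rcases rep n with he | ⟨x, t, rfl⟩
  · rw [f_even he, mu_even he, mu_even (by omega)]
    omega
  · rw [f_hair, mu_hair]
    cases hW : Wb x t <;> cases hE : Eb x t <;>
      simp only [cond_true, cond_false]
    · split_ifs with h1
      · rw [mu_hair]; omega
      · rw [mu_even (by omega)]; omega
    · split_ifs with h1
      · rw [mu_hair]; omega
      · rw [mu_even (by omega)]; omega
    · rw [mu_even (by omega)]; omega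
    · rw [mu_even (by omega)]; omega

lemma f_zero : f 0 = 0 := by rw [f_even (by omega)]

lemma f_fix {n : ℕ} (h : f n = n) : n = 0 := by
  by_contra hn
  have := mu_decr hn
  rw [h] at this
  omega

lemma reaches_zero (n : ℕ) : ∃ m, f^[m] n = 0 := by
  have main : ∀ k n, mu n ≤ k → ∃ m, f^[m] n = 0 := by
    intro k
    induction k with
    | zero =>
      intro n hn
      by_cases h0 : n = 0
      · exact ⟨0, h0⟩
      · exact absurd (mu_decr h0) (by omega)
    | succ k ih =>
      intro n hn
      by_cases h0 : n = 0
      · exact ⟨0, h0⟩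
      · have hlt := mu_decr h0
        obtain ⟨m, hm⟩ := ih (f n) (by omega)
        exact ⟨m + 1, by rw [Function.iterate_succ_apply]; exact hm⟩
  exact main (mu n) n le_rfl

lemma Kp_iff (x : ℕ) :
    Kp x ↔ (Nat.Partrec.Code.eval (Denumerable.ofNat Code x) 0).Dom := by
  rw [Part.dom_iff_mem]
  constructor
  · rintro ⟨s, hs⟩
    unfold Tb at hs
    rw [Option.isSome_iff_exists] at hs
    obtain ⟨a, ha⟩ := hs
    exact ⟨a, Nat.Partrec.Code.evaln_complete.2 ⟨s, ha⟩⟩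
  · rintro ⟨a, ha⟩
    obtain ⟨k, hk⟩ := Nat.Partrec.Code.evaln_complete.1 ha
    exact ⟨k, by unfold Tb; rw [Option.isSome_iff_exists]; exact ⟨a, hk⟩⟩

lemma primrec_Tb : Primrec₂ Tb :=
  Primrec.option_isSome.comp
    (Nat.Partrec.Code.primrec_evaln.comp
      ((Primrec.snd.pair ((Primrec.ofNat Code).comp Primrec.fst)).pair (Primrec.const 0)))

lemma primrec_Eb : Primrec₂ Eb := by
  have h : Primrec₂ (fun (p : ℕ × ℕ) (q : ℕ × Bool) => q.2 || Tb p.1 q.1) :=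
    (Primrec.dom_bool₂ (· || ·)).comp (Primrec.snd.comp Primrec.snd)
      (primrec_Tb.comp (Primrec.fst.comp Primrec.fst) (Primrec.fst.comp Primrec.snd))
  exact (Primrec.nat_rec' Primrec.snd (Primrec.const false) h).of_eq fun p => by
    induction p.2 with
    | zero => rfl
    | succ t ih => simp only [Eb_succ, ← ih]

lemma primrec_Wb : Primrec₂ Wb :=
  (Primrec.dom_bool₂ (fun a b => a && !b)).comp primrec_Tb primrec_Eb

lemma primrec_f : Primrec f := by
  have px : Primrec fun n : ℕ => (Nat.unpair (n / 2)).1 :=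
    Primrec.fst.comp (Primrec.unpair.comp (Primrec.nat_div.comp Primrec.id (Primrec.const 2)))
  have pt : Primrec fun n : ℕ => (Nat.unpair (n / 2)).2 :=
    Primrec.snd.comp (Primrec.unpair.comp (Primrec.nat_div.comp Primrec.id (Primrec.const 2)))
  have pA : Primrec fun n : ℕ => 4 * (Nat.unpair (n / 2)).1 + 4 :=
    Primrec.nat_add.comp (Primrec.nat_mul.comp (Primrec.const 4) px) (Primrec.const 4)
  have pC : Primrec fun n : ℕ => 4 * (Nat.unpair (n / 2)).1 + 2 :=
    Primrec.nat_add.comp (Primrec.nat_mul.comp (Primrec.const 4) px) (Primrec.const 2)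
  have phair : ∀ k : ℕ, Primrec fun n : ℕ =>
      hair (Nat.unpair (n / 2)).1 ((Nat.unpair (n / 2)).2 - k) := by
    intro k
    exact Primrec.nat_add.comp
      (Primrec.nat_mul.comp (Primrec.const 2)
        (Primrec₂.natPair.comp px (Primrec.nat_sub.comp pt (Primrec.const k))))
      (Primrec.const 1)
  unfold f
  apply Primrec.ite (Primrec.eq.comp (Primrec.nat_mod.comp Primrec.id (Primrec.const 2))
    (Primrec.const 0))
  · exact Primrec.nat_sub.comp Primrec.id (Primrec.const 2)
  · apply Primrec.cond (primrec_Wb.comp px pt) pA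
    apply Primrec.cond (primrec_Eb.comp px pt)
    · exact Primrec.ite (Primrec.nat_le.comp (Primrec.const 2) pt) (phair 2) pC
    · exact Primrec.ite (Primrec.nat_le.comp (Primrec.const 1) pt) (phair 1) pC

/-- The c.e. witness predicate. -/
def gb (y s : ℕ) : Bool :=
  decide (y = 0) || decide (y % 4 = 2) ||
    (decide (y % 4 = 0) && decide (0 < y) && Tb (y / 4 - 1) s)

lemma primrec_gb : Primrec₂ gb := by
  have p1 : Primrec fun p : ℕ × ℕ => decide (p.1 = 0) :=
    (Primrec.eq.comp Primrec.fst (Primrec.const 0)).decide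
  have p2 : Primrec fun p : ℕ × ℕ => decide (p.1 % 4 = 2) :=
    (Primrec.eq.comp (Primrec.nat_mod.comp Primrec.fst (Primrec.const 4)) (Primrec.const 2)).decide
  have p3 : Primrec fun p : ℕ × ℕ => decide (p.1 % 4 = 0) :=
    (Primrec.eq.comp (Primrec.nat_mod.comp Primrec.fst (Primrec.const 4)) (Primrec.const 0)).decide
  have p4 : Primrec fun p : ℕ × ℕ => decide (0 < p.1) :=
    (Primrec.nat_lt.comp (Primrec.const 0) Primrec.fst).decide
  have p5 : Primrec fun p : ℕ × ℕ => Tb (p.1 / 4 - 1) p.2 :=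
    primrec_Tb.comp
      (Primrec.nat_sub.comp (Primrec.nat_div.comp Primrec.fst (Primrec.const 4))
        (Primrec.const 1)) Primrec.snd
  exact ((Primrec.dom_bool₂ (· || ·)).comp ((Primrec.dom_bool₂ (· || ·)).comp p1 p2)
    ((Primrec.dom_bool₂ (· && ·)).comp ((Primrec.dom_bool₂ (· && ·)).comp p3 p4) p5))

lemma gb_iff (y : ℕ) : (∃ s, gb y s = true) ↔
    (y = 0 ∨ y % 4 = 2 ∨ (y % 4 = 0 ∧ 0 < y ∧ Kp (y / 4 - 1))) := by
  unfold gb Kp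
  constructor
  · rintro ⟨s, hs⟩
    simp only [Bool.or_eq_true, Bool.and_eq_true, decide_eq_true_eq] at hs
    rcases hs with (h | h) | ⟨⟨h1, h2⟩, h3⟩
    · exact Or.inl h
    · exact Or.inr (Or.inl h)
    · exact Or.inr (Or.inr ⟨h1, h2, s, h3⟩)
  · rintro (h | h | ⟨h1, h2, s, h3⟩)
    · exact ⟨0, by simp [h]⟩
    · exact ⟨0, by simp [h]⟩
    · exact ⟨s, by simp [h1, h2, h3]⟩

lemma re_pred : REPred fun y : ℕ => (f ⁻¹' {y}).ncard = 2 := by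
  have pc : Computable₂ gb := primrec_gb.to_comp
  have hp : Partrec fun y : ℕ => Nat.rfind fun s => (Part.some (gb y s) : Part Bool) :=
    Partrec.rfind pc.partrec₂
  refine hp.dom_re.of_eq fun y => ?_
  refine Nat.rfind_dom.trans ?_
  simp only [Part.mem_some_iff, Part.some_dom]
  constructor
  · rintro ⟨n, hn, _⟩
    exact (ncard_two_iff y).2 ((gb_iff y).1 ⟨n, hn.symm⟩)
  · intro h
    obtain ⟨s, hs⟩ := (gb_iff y).2 ((ncard_two_iff y).1 h)
    exact ⟨s, hs.symm, fun _ => trivial⟩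

lemma not_computable : ¬ ComputablePred fun y : ℕ => (f ⁻¹' {y}).ncard = 2 := by
  intro hC
  apply ComputablePred.halting_problem 0
  obtain ⟨g, hg, hp⟩ := ComputablePred.computable_iff.1 hC
  apply ComputablePred.computable_iff.2
  refine ⟨fun c => g (4 * Encodable.encode c + 4), ?_, ?_⟩
  · exact hg.comp ((Primrec.nat_add.comp
      (Primrec.nat_mul.comp (Primrec.const 4) Primrec.encode) (Primrec.const 4)).to_comp)
  · funext c
    have h1 : ((fun y : ℕ => (f ⁻¹' {y}).ncard = 2) (4 * Encodable.encode c + 4)) =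
        (g (4 * Encodable.encode c + 4) = true) := by rw [hp]
    have h2 : (f ⁻¹' {(4 * Encodable.encode c + 4 : ℕ)}).ncard = 2 ↔
        (Nat.Partrec.Code.eval c 0).Dom := by
      rw [ncard_two_iff]
      have he : (4 * Encodable.encode c + 4) / 4 - 1 = Encodable.encode c := by omega
      rw [he]
      constructor
      · rintro (h | h | ⟨_, _, hK⟩)
        · omega
        · omega
        · rw [Kp_iff, Denumerable.ofNat_encode] at hK; exact hK
      · intro h
        refine Or.inr (Or.inr ⟨by omega, by omega, ?_⟩)
        rw [Kp_iff, Denumerable.ofNat_encode]; exact h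
    rw [← h1] at *
    exact propext (h2.symm.trans (by rw [h1]))

end Stmt11

/-- There is a computable (2,1):1 structure which is a single 1-cycle (exactly one
fixed point, and every element eventually maps to it) whose split hair set is c.e.
but not computable. -/
theorem stmt_11 :
    ∃ f : ℕ → ℕ, Computable f ∧
      (∀ x : ℕ, (f ⁻¹' {x}).ncard = 1 ∨ (f ⁻¹' {x}).ncard = 2) ∧
      REPred (fun x : ℕ => (f ⁻¹' {x}).ncard = 2) ∧
      ¬ ComputablePred (fun x : ℕ => (f ⁻¹' {x}).ncard = 2) ∧
      (∃! x : ℕ, f x = x) ∧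
      (∀ x : ℕ, ∃ n : ℕ, f^[n + 1] x = f^[n] x) := by
  refine ⟨Stmt11.f, Stmt11.primrec_f.to_comp, Stmt11.ncard_one_or_two, Stmt11.re_pred,
    Stmt11.not_computable, ⟨0, Stmt11.f_zero, fun y hy => Stmt11.f_fix hy⟩, fun x => ?_⟩
  obtain ⟨m, hm⟩ := Stmt11.reaches_zero x
  refine ⟨m, ?_⟩
  rw [Function.iterate_succ_apply', hm, Stmt11.f_zero]
end

section
/- Let C ⊆ ℕ be any computably enumerable set containing 0. Then there exists a computable function f : ℕ → ℕ with all fibers of size 1 or 2 and a computable injection θ : ℕ → ℕ such that for all x, x ∈ C if and only if θ(x) has two preimages under f. In particular if C is not computable then {y : |f⁻¹(y)| = 2} is not computable. -/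
open Nat.Partrec (Code)
open Nat.Partrec.Code

/-- The (2,1):1 map built from a halting-stage predicate `H`. -/
def myF (H : ℕ → ℕ → Bool) (n : ℕ) : ℕ :=
  if n % 2 = 0 then n
  else
    if H (n / 2).unpair.1 (n / 2).unpair.2 then
      (if H (n / 2).unpair.1 ((n / 2).unpair.2 - 1) then
        2 * Nat.pair (n / 2).unpair.1 ((n / 2).unpair.2 - 1) + 1
      else 2 * (n / 2).unpair.1)
    else n

section

variable {H : ℕ → ℕ → Bool}

lemma myF_even (x : ℕ) : myF H (2 * x) = 2 * x := by
  simp [myF, Nat.mul_mod_right]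

lemma myF_slot (x s : ℕ) :
    myF H (2 * Nat.pair x s + 1) =
      if H x s then
        (if H x (s - 1) then 2 * Nat.pair x (s - 1) + 1 else 2 * x)
      else 2 * Nat.pair x s + 1 := by
  have h1 : (2 * Nat.pair x s + 1) % 2 = 1 := by omega
  have h2 : (2 * Nat.pair x s + 1) / 2 = Nat.pair x s := by omega
  simp [myF, h1, h2]

variable (H0 : ∀ x, H x 0 = false)
    (Hmono : ∀ x s t, s ≤ t → H x s = true → H x t = true)

include H0 Hmono

/-- uniqueness of the "new" stage -/
lemma new_unique {x s t : ℕ} (hs : H x s = true) (hs' : H x (s - 1) = false)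
    (ht : H x t = true) (ht' : H x (t - 1) = false) : s = t := by
  rcases lt_trichotomy s t with h | h | h
  · exact absurd (Hmono x s (t - 1) (by omega) hs) (by simp [ht'])
  · exact h
  · exact absurd (Hmono x t (s - 1) (by omega) ht) (by simp [hs'])

lemma fiber_even_nohalt {x : ℕ} (hx : ∀ s, H x s = false) :
    myF H ⁻¹' {2 * x} = {2 * x} := by
  ext n
  simp only [Set.mem_preimage, Set.mem_singleton_iff]
  constructor
  · intro hn
    by_cases hp : n % 2 = 0
    · rwa [myF, if_pos hp] at hn
    · set a := (n / 2).unpair.1 with ha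
      set b := (n / 2).unpair.2 with hb
      have hn2 : n = 2 * Nat.pair a b + 1 := by
        rw [ha, hb, Nat.pair_unpair]; omega
      rw [hn2, myF_slot] at hn
      by_cases h1 : H a b = true
      · rw [if_pos h1] at hn
        by_cases h2 : H a (b - 1) = true
        · rw [if_pos h2] at hn; omega
        · rw [if_neg h2] at hn
          have : a = x := by omega
          rw [this] at h1
          simp [hx b] at h1
      · rw [if_neg h1] at hn; omega
  · intro hn; rw [hn, myF_even]

lemma fiber_even_halt {x s : ℕ} (hs : H x s = true) (hs' : H x (s - 1) = false) :
    myF H ⁻¹' {2 * x} = {2 * x, 2 * Nat.pair x s + 1} := by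
  ext n
  simp only [Set.mem_preimage, Set.mem_singleton_iff, Set.mem_insert_iff]
  constructor
  · intro hn
    by_cases hp : n % 2 = 0
    · rw [myF, if_pos hp] at hn; left; exact hn
    · set a := (n / 2).unpair.1 with ha
      set b := (n / 2).unpair.2 with hb
      have hn2 : n = 2 * Nat.pair a b + 1 := by
        rw [ha, hb, Nat.pair_unpair]; omega
      rw [hn2, myF_slot] at hn
      by_cases h1 : H a b = true
      · rw [if_pos h1] at hn
        by_cases h2 : H a (b - 1) = true
        · rw [if_pos h2] at hn; omega
        · rw [if_neg h2] at hn
          have hax : a = x := by omega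
          subst hax
          have hbs : b = s :=
            new_unique H0 Hmono h1 (by simpa using h2) hs hs'
          right; rw [hn2, hbs]
      · rw [if_neg h1] at hn; omega
  · rintro (hn | hn)
    · rw [hn, myF_even]
    · rw [hn, myF_slot, if_pos hs, if_neg (by simp [hs'])]

lemma fiber_odd_nohalt {x s : ℕ} (hs : H x s = false) :
    myF H ⁻¹' {2 * Nat.pair x s + 1} = {2 * Nat.pair x s + 1} := by
  ext n
  simp only [Set.mem_preimage, Set.mem_singleton_iff]
  constructor
  · intro hn
    by_cases hp : n % 2 = 0
    · rw [myF, if_pos hp] at hn; omega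
    · set a := (n / 2).unpair.1 with ha
      set b := (n / 2).unpair.2 with hb
      have hn2 : n = 2 * Nat.pair a b + 1 := by
        rw [ha, hb, Nat.pair_unpair]; omega
      rw [hn2, myF_slot] at hn
      by_cases h1 : H a b = true
      · rw [if_pos h1] at hn
        by_cases h2 : H a (b - 1) = true
        · rw [if_pos h2] at hn
          have hpq : Nat.pair a (b - 1) = Nat.pair x s := by omega
          obtain ⟨rfl, hbs⟩ := Nat.pair_eq_pair.1 hpq
          rw [hbs] at h2
          simp [hs] at h2
        · rw [if_neg h2] at hn; omega
      · rw [if_neg h1] at hn; omega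
  · intro hn; rw [hn, myF_slot, if_neg (by simp [hs])]

lemma fiber_odd_halt {x s : ℕ} (hs : H x s = true) :
    myF H ⁻¹' {2 * Nat.pair x s + 1} = {2 * Nat.pair x (s + 1) + 1} := by
  ext n
  simp only [Set.mem_preimage, Set.mem_singleton_iff]
  constructor
  · intro hn
    by_cases hp : n % 2 = 0
    · rw [myF, if_pos hp] at hn; omega
    · set a := (n / 2).unpair.1 with ha
      set b := (n / 2).unpair.2 with hb
      have hn2 : n = 2 * Nat.pair a b + 1 := by
        rw [ha, hb, Nat.pair_unpair]; omega
      rw [hn2, myF_slot] at hn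
      by_cases h1 : H a b = true
      · rw [if_pos h1] at hn
        by_cases h2 : H a (b - 1) = true
        · rw [if_pos h2] at hn
          have hpq : Nat.pair a (b - 1) = Nat.pair x s := by omega
          obtain ⟨rfl, hbs⟩ := Nat.pair_eq_pair.1 hpq
          have hb1 : b ≠ 0 := by
            intro h; rw [h] at h2; simp [H0] at h2
          have : b = s + 1 := by omega
          rw [hn2, this]
        · rw [if_neg h2] at hn; omega
      · rw [if_neg h1] at hn
        have hpq : Nat.pair a b = Nat.pair x s := by omega
        obtain ⟨rfl, rfl⟩ := Nat.pair_eq_pair.1 hpq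
        simp [hs] at h1
  · intro hn
    have h1 : H x (s + 1) = true := Hmono x s (s + 1) (by omega) hs
    rw [hn, myF_slot, if_pos h1]
    simp only [Nat.add_sub_cancel]
    rw [if_pos hs]

end

lemma myF_primrec {H : ℕ → ℕ → Bool} (hH : Primrec₂ H) : Primrec (myF H) := by
  have hx : Primrec fun n : ℕ => (n / 2).unpair.1 :=
    Primrec.fst.comp (Primrec.unpair.comp
      (Primrec.nat_div.comp Primrec.id (Primrec.const 2)))
  have hs : Primrec fun n : ℕ => (n / 2).unpair.2 :=
    Primrec.snd.comp (Primrec.unpair.comp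
      (Primrec.nat_div.comp Primrec.id (Primrec.const 2)))
  have hs1 : Primrec fun n : ℕ => (n / 2).unpair.2 - 1 :=
    Primrec.nat_sub.comp hs (Primrec.const 1)
  have hcond1 : Primrec fun n : ℕ => H (n / 2).unpair.1 (n / 2).unpair.2 :=
    hH.comp hx hs
  have hcond2 : Primrec fun n : ℕ => H (n / 2).unpair.1 ((n / 2).unpair.2 - 1) :=
    hH.comp hx hs1
  have hin2 : Primrec fun n : ℕ =>
      2 * Nat.pair (n / 2).unpair.1 ((n / 2).unpair.2 - 1) + 1 :=
    Primrec.succ.comp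
      (Primrec.nat_mul.comp (Primrec.const 2) (Primrec₂.natPair.comp hx hs1))
  have hin3 : Primrec fun n : ℕ => 2 * (n / 2).unpair.1 :=
    Primrec.nat_mul.comp (Primrec.const 2) hx
  have hinner : Primrec fun n : ℕ =>
      bif H (n / 2).unpair.1 (n / 2).unpair.2 then
        (bif H (n / 2).unpair.1 ((n / 2).unpair.2 - 1) then
          2 * Nat.pair (n / 2).unpair.1 ((n / 2).unpair.2 - 1) + 1
        else 2 * (n / 2).unpair.1)
      else n :=
    Primrec.cond hcond1 (Primrec.cond hcond2 hin2 hin3) Primrec.id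
  have hmod : PrimrecPred fun n : ℕ => n % 2 = 0 :=
    PrimrecRel.comp Primrec.eq
      (Primrec.nat_mod.comp Primrec.id (Primrec.const 2)) (Primrec.const 0)
  exact (Primrec.ite hmod Primrec.id hinner).of_eq fun n => by
    simp [myF, Bool.cond_eq_ite]

/-- Any c.e. set containing 0 can be coded, via a computable injection, into the
split hairs of a computable (2,1):1 structure. In particular a non-computable c.e.
set yields a non-computable split hair set. -/
theorem stmt_12 (C : ℕ → Prop) (hC : REPred C) (h0 : C 0) :
    ∃ f θ : ℕ → ℕ, Computable f ∧ Computable θ ∧ Function.Injective θ ∧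
      (∀ x : ℕ, (f ⁻¹' {x}).ncard = 1 ∨ (f ⁻¹' {x}).ncard = 2) ∧
      (∀ x : ℕ, C x ↔ ∃ y₁ y₂ : ℕ, y₁ ≠ y₂ ∧ f y₁ = θ x ∧ f y₂ = θ x) ∧
      (¬ ComputablePred C →
        ¬ ComputablePred fun y : ℕ => (f ⁻¹' {y}).ncard = 2) := by
  classical
  have hq : Partrec fun a : ℕ =>
      (Part.assert (C a) fun _ => Part.some ()).map fun _ => (0 : ℕ) :=
    hC.map ((Computable.const 0).to₂ : Computable₂ fun (_ : ℕ) (_ : Unit) => (0 : ℕ))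
  obtain ⟨c, hc⟩ := exists_code.1 (Partrec.nat_iff.1 hq)
  set H : ℕ → ℕ → Bool := fun x s => (evaln s c x).isSome with hHdef
  have H0 : ∀ x, H x 0 = false := by
    intro x
    cases h : evaln 0 c x with
    | none => simp [hHdef, h]
    | some a => exact absurd (evaln_bound (Option.mem_def.2 h)) (by omega)
  have Hmono : ∀ x s t, s ≤ t → H x s = true → H x t = true := by
    intro x s t hst h
    simp only [hHdef, Option.isSome_iff_exists] at h ⊢
    obtain ⟨a, ha⟩ := h
    exact ⟨a, evaln_mono hst (Option.mem_def.2 ha)⟩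
  have hCiff : ∀ x, C x ↔ ∃ s, H x s = true := by
    intro x
    have hdom : (eval c x).Dom ↔ C x := by
      rw [hc]
      exact ⟨fun ⟨h, _⟩ => h, fun h => ⟨h, trivial⟩⟩
    have h2 : (eval c x).Dom ↔ ∃ s, H x s = true := by
      rw [Part.dom_iff_mem]
      constructor
      · rintro ⟨a, ha⟩
        obtain ⟨k, hk⟩ := evaln_complete.1 ha
        exact ⟨k, by simp only [hHdef, Option.isSome_iff_exists]; exact ⟨a, hk⟩⟩
      · rintro ⟨s, hs⟩
        simp only [hHdef, Option.isSome_iff_exists] at hs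
        obtain ⟨a, ha⟩ := hs
        exact ⟨a, evaln_complete.2 ⟨s, ha⟩⟩
    exact hdom.symm.trans h2
  have hfind : ∀ x : ℕ, (∃ s, H x s = true) →
      ∃ s, H x s = true ∧ H x (s - 1) = false := by
    intro x hx
    refine ⟨Nat.find hx, Nat.find_spec hx, ?_⟩
    by_cases h : Nat.find hx = 0
    · exact absurd (h ▸ Nat.find_spec hx) (by simp [H0 x])
    · have := Nat.find_min hx (m := Nat.find hx - 1) (by omega)
      simpa using this
  have hH : Primrec₂ H :=
    Primrec.option_isSome.comp
      (primrec_evaln.comp (((Primrec.snd).pair (Primrec.const c)).pair Primrec.fst))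
  refine ⟨myF H, fun x => 2 * x, (myF_primrec hH).to_comp,
    (Primrec.nat_mul.comp (Primrec.const 2) Primrec.id).to_comp,
    fun a b h => Nat.eq_of_mul_eq_mul_left two_pos h, ?_, ?_, ?_⟩
  · -- all fibers have size 1 or 2
    intro y
    by_cases hp : y % 2 = 0
    · have hy : y = 2 * (y / 2) := by omega
      by_cases hx : ∃ s, H (y / 2) s = true
      · obtain ⟨s, hs, hs'⟩ := hfind _ hx
        rw [hy, fiber_even_halt H0 Hmono hs hs', Set.ncard_pair (by omega)]
        right; rfl
      · push_neg at hx
        rw [hy, fiber_even_nohalt H0 Hmono (fun s => by simpa using hx s)]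
        left; exact Set.ncard_singleton _
    · have hy : y = 2 * Nat.pair (y / 2).unpair.1 (y / 2).unpair.2 + 1 := by
        rw [Nat.pair_unpair]; omega
      by_cases hb : H (y / 2).unpair.1 (y / 2).unpair.2 = true
      · rw [hy, fiber_odd_halt H0 Hmono hb]
        left; exact Set.ncard_singleton _
      · rw [hy, fiber_odd_nohalt H0 Hmono (by simpa using hb)]
        left; exact Set.ncard_singleton _
  · -- coding
    intro x
    rw [hCiff x]
    constructor
    · intro hx
      obtain ⟨s, hs, hs'⟩ := hfind _ hx
      refine ⟨2 * x, 2 * Nat.pair x s + 1, by omega, myF_even x, ?_⟩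
      rw [myF_slot, if_pos hs, if_neg (by simp [hs'])]
    · rintro ⟨y₁, y₂, hne, h1, h2⟩
      by_contra hnx
      have hfib : myF H ⁻¹' {2 * x} = {2 * x} :=
        fiber_even_nohalt H0 Hmono (fun s => by
          by_contra hcon
          exact hnx ⟨s, by simpa using hcon⟩)
      have m1 : y₁ ∈ myF H ⁻¹' {2 * x} := h1
      have m2 : y₂ ∈ myF H ⁻¹' {2 * x} := h2
      rw [hfib] at m1 m2
      exact hne (m1.trans m2.symm)
  · -- non-computability transfer
    intro hnc hS
    apply hnc
    have key : ∀ x, C x ↔ (myF H ⁻¹' {2 * x}).ncard = 2 := by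
      intro x
      rw [hCiff x]
      constructor
      · intro hx
        obtain ⟨s, hs, hs'⟩ := hfind _ hx
        rw [fiber_even_halt H0 Hmono hs hs', Set.ncard_pair (by omega)]
      · intro h
        by_contra hx
        rw [fiber_even_nohalt H0 Hmono (fun s => by
          by_contra hcon
          exact hx ⟨s, by simpa using hcon⟩), Set.ncard_singleton] at h
        omega
    obtain ⟨g, hg, hgS⟩ := ComputablePred.computable_iff.1 hS
    apply ComputablePred.computable_iff.2
    refine ⟨fun x => g (2 * x),
      hg.comp (Primrec.nat_mul.comp (Primrec.const 2) Primrec.id).to_comp, ?_⟩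
    funext x
    exact propext ((key x).trans (iff_of_eq (congrFun hgS (2 * x))))
end

section
/- There exist computable functions f, g : ℕ → ℕ, each with all fibers of size 1 or 2, and a bijection h : ℕ → ℕ with h ∘ f = g ∘ h (so the structures (ℕ, f) and (ℕ, g) are isomorphic), but no computable bijection h' : ℕ → ℕ satisfies h' ∘ f = g ∘ h'. -/
namespace Stmt13

open Nat.Partrec Nat.Partrec.Code Function

/-- code `e` (as a natural number) halts on input 0 at exactly step `s`. -/
def halt (e s : ℕ) : Bool :=
  (evaln (s+1) (Denumerable.ofNat Code e) 0).isSome &&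
    !(evaln s (Denumerable.ofNat Code e) 0).isSome

lemma halt_iff {e s : ℕ} : halt e s = true ↔
    (evaln (s+1) (Denumerable.ofNat Code e) 0).isSome = true ∧
    (evaln s (Denumerable.ofNat Code e) 0).isSome = false := by
  simp [halt]

lemma isSome_mono {c : Code} {k k' : ℕ} (h : k ≤ k')
    (hk : (evaln k c 0).isSome = true) : (evaln k' c 0).isSome = true := by
  rw [Option.isSome_iff_exists] at hk ⊢
  obtain ⟨x, hx⟩ := hk
  exact ⟨x, evaln_mono h hx⟩

lemma halt_unique {e s s' : ℕ} (h : halt e s = true) (h' : halt e s' = true) : s = s' := by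
  rcases halt_iff.1 h with ⟨h1, h2⟩
  rcases halt_iff.1 h' with ⟨h1', h2'⟩
  by_contra hne
  rcases Nat.lt_or_ge s s' with hlt | hge
  · have := isSome_mono (Nat.succ_le_of_lt hlt) h1
    rw [this] at h2'; exact absurd h2' (by simp)
  · have hlt : s' < s := by omega
    have := isSome_mono (Nat.succ_le_of_lt hlt) h1'
    rw [this] at h2; exact absurd h2 (by simp)

def KS : Set ℕ := {e | ∃ s, halt e s = true}

lemma mem_KS_iff {e : ℕ} : e ∈ KS ↔ ((Denumerable.ofNat Code e).eval 0).Dom := by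
  constructor
  · rintro ⟨s, hs⟩
    rcases halt_iff.1 hs with ⟨h1, -⟩
    rw [Option.isSome_iff_exists] at h1
    obtain ⟨x, hx⟩ := h1
    rw [Part.dom_iff_mem]
    exact ⟨x, evaln_complete.2 ⟨s+1, hx⟩⟩
  · intro hd
    rw [Part.dom_iff_mem] at hd
    obtain ⟨x, hx⟩ := hd
    obtain ⟨k, hk⟩ := evaln_complete.1 hx
    have hex : ∃ k, (evaln k (Denumerable.ofNat Code e) 0).isSome = true :=
      ⟨k, Option.isSome_iff_exists.2 ⟨x, hk⟩⟩
    classical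
    set k₀ := Nat.find hex with hk₀
    have hk₀s : (evaln k₀ (Denumerable.ofNat Code e) 0).isSome = true := Nat.find_spec hex
    have hk₀pos : k₀ ≠ 0 := by
      intro h0
      rw [h0] at hk₀s
      simp [evaln] at hk₀s
    refine ⟨k₀ - 1, halt_iff.2 ⟨?_, ?_⟩⟩
    · have : k₀ - 1 + 1 = k₀ := by omega
      rwa [this]
    · by_contra hcon
      simp only [Bool.not_eq_false] at hcon
      exact absurd hcon (Nat.find_min hex (by omega))

lemma KS_infinite : KS.Infinite := by
  apply Set.infinite_of_injective_forall_mem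
    (f := fun k : ℕ => Encodable.encode (Code.const k))
  case hi =>
    intro a b hab
    exact const_inj (Encodable.encode_injective hab)
  case hf =>
    intro k
    show Encodable.encode (Code.const k) ∈ KS
    rw [mem_KS_iff]
    simp only [Denumerable.ofNat_encode]
    rw [eval_const]
    trivial

/-- A code that diverges everywhere, composed with `const k`. -/
def divCode (k : ℕ) : Code := (Code.rfind' (Code.const 1)).comp (Code.const k)

lemma divCode_eval (k : ℕ) : ¬ ((divCode k).eval 0).Dom := by
  intro h
  rw [Part.dom_iff_mem] at h
  obtain ⟨x, hx⟩ := h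
  simp only [divCode, Code.eval, eval_const] at hx
  rw [Part.bind_eq_bind, Part.bind_some] at hx
  simp only [Nat.unpaired, Part.mem_map_iff] at hx
  obtain ⟨z, hz, -⟩ := hx
  have := Nat.rfind_spec hz
  simp at this

lemma KS_compl_infinite : KSᶜ.Infinite := by
  apply Set.infinite_of_injective_forall_mem
    (f := fun k : ℕ => Encodable.encode (divCode k))
  case hi =>
    intro a b hab
    have := Encodable.encode_injective hab
    simp only [divCode] at this
    injection this with h1 h2
    exact const_inj h2
  case hf =>
    intro k
    show Encodable.encode (divCode k) ∈ KSᶜ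
    simp only [Set.mem_compl_iff, mem_KS_iff, Denumerable.ofNat_encode]
    exact divCode_eval k

lemma KS_not_computable : ¬ ComputablePred (· ∈ KS) := by
  intro h
  apply ComputablePred.halting_problem 0
  obtain ⟨f, hf, hpf⟩ := ComputablePred.computable_iff.1 h
  refine ComputablePred.computable_iff.2 ⟨fun c => f (Encodable.encode c), 
    hf.comp Computable.encode, ?_⟩
  funext c
  have : (Encodable.encode c ∈ KS) = (f (Encodable.encode c) = true) := congrFun hpf _
  rw [← this]
  simp only [mem_KS_iff, Denumerable.ofNat_encode]

/-! ### The (2,1):1 structures -/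

/-- The structure map determined by an attachment function `att`.
Points are `pair i n`. Even `i = 2e`: the spine of component `e`, `n` the depth,
with a loop at depth 0.  Odd `i = 2j+1`: the ray indexed by `j`; if `att j` holds
the base of the ray is attached at depth 1 of the spine of `(unpair j).1`,
otherwise it loops at its own base. -/
def mk (att : ℕ → Bool) (x : ℕ) : ℕ :=
  if x.unpair.1 % 2 = 1 ∧ x.unpair.2 = 0 then
    (if att (x.unpair.1 / 2) = true then Nat.pair (2 * ((x.unpair.1 / 2).unpair.1)) 1 else x)
  else Nat.pair x.unpair.1 (x.unpair.2 - 1)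

lemma mk_even {att : ℕ → Bool} {a b : ℕ} (ha : a % 2 = 0) :
    mk att (Nat.pair a b) = Nat.pair a (b - 1) := by
  simp [mk, Nat.unpair_pair, ha]

lemma mk_odd_pos {att : ℕ → Bool} {a b : ℕ} (ha : a % 2 = 1) (hb : b ≠ 0) :
    mk att (Nat.pair a b) = Nat.pair a (b - 1) := by
  simp [mk, Nat.unpair_pair, ha, hb]

lemma mk_odd_zero_t {att : ℕ → Bool} {a : ℕ} (ha : a % 2 = 1) (h : att (a / 2) = true) :
    mk att (Nat.pair a 0) = Nat.pair (2 * ((a / 2).unpair.1)) 1 := by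
  simp [mk, Nat.unpair_pair, ha, h]

lemma mk_odd_zero_f {att : ℕ → Bool} {a : ℕ} (ha : a % 2 = 1) (h : att (a / 2) = false) :
    mk att (Nat.pair a 0) = Nat.pair a 0 := by
  simp [mk, Nat.unpair_pair, ha, h]

lemma fiber_eq (att : ℕ → Bool) (i m : ℕ) :
    mk att ⁻¹' {Nat.pair i m} =
      {Nat.pair i (m+1)} ∪
      {x | x = Nat.pair i 0 ∧ m = 0 ∧ (i % 2 = 0 ∨ att (i / 2) = false)} ∪
      {x | ∃ j, x = Nat.pair (2*j+1) 0 ∧ att j = true ∧ 2 * j.unpair.1 = i ∧ m = 1} := by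
  ext x
  obtain ⟨a, b, rfl⟩ : ∃ a b, x = Nat.pair a b :=
    ⟨x.unpair.1, x.unpair.2, (Nat.pair_unpair x).symm⟩
  simp only [Set.mem_preimage, Set.mem_singleton_iff, Set.mem_union, Set.mem_setOf_eq]
  constructor
  · intro hx
    rcases Nat.mod_two_eq_zero_or_one a with ha | ha
    · rw [mk_even ha, Nat.pair_eq_pair] at hx
      obtain ⟨rfl, rfl⟩ := hx
      rcases b with _ | b
      · exact Or.inl (Or.inr ⟨rfl, rfl, Or.inl ha⟩)
      · exact Or.inl (Or.inl rfl)
    · rcases b with _ | b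
      · rcases hatt : att (a / 2) with _ | _
        · rw [mk_odd_zero_f ha hatt, Nat.pair_eq_pair] at hx
          obtain ⟨rfl, rfl⟩ := hx
          exact Or.inl (Or.inr ⟨rfl, rfl, Or.inr hatt⟩)
        · rw [mk_odd_zero_t ha hatt, Nat.pair_eq_pair] at hx
          obtain ⟨hi, rfl⟩ := hx
          refine Or.inr ⟨a / 2, ?_, hatt, hi, rfl⟩
          have : 2 * (a / 2) + 1 = a := by omega
          rw [this]
      · rw [mk_odd_pos ha (Nat.succ_ne_zero b), Nat.pair_eq_pair] at hx
        obtain ⟨rfl, rfl⟩ := hx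
        exact Or.inl (Or.inl rfl)
  · rintro ((hx | ⟨hx, rfl, hc⟩) | ⟨j, hx, hatt, hji, rfl⟩)
    · rw [Nat.pair_eq_pair] at hx
      obtain ⟨rfl, rfl⟩ := hx
      rcases Nat.mod_two_eq_zero_or_one a with ha | ha
      · rw [mk_even ha]; simp
      · rw [mk_odd_pos ha (Nat.succ_ne_zero m)]; simp
    · rw [Nat.pair_eq_pair] at hx
      obtain ⟨rfl, rfl⟩ := hx
      rcases hc with hc | hc
      · rw [mk_even hc]
      · rcases Nat.mod_two_eq_zero_or_one a with ha | ha
        · rw [mk_even ha]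
        · rw [mk_odd_zero_f ha hc]
    · rw [Nat.pair_eq_pair] at hx
      obtain ⟨rfl, rfl⟩ := hx
      have h2 : (2 * j + 1) / 2 = j := by omega
      rw [mk_odd_zero_t (by omega) (by rw [h2]; exact hatt), h2, hji]

/-- the "two-element fiber" condition -/
def big (att : ℕ → Bool) (i m : ℕ) : Prop :=
  (m = 0 ∧ (i % 2 = 0 ∨ att (i / 2) = false)) ∨
    (m = 1 ∧ ∃ j, att j = true ∧ 2 * j.unpair.1 = i)

/-- at most one attached ray per spine -/
def Uniq (att : ℕ → Bool) : Prop :=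
  ∀ j j', att j = true → att j' = true → j.unpair.1 = j'.unpair.1 → j = j'

lemma fiber_spec (att : ℕ → Bool) (huniq : Uniq att) (i m : ℕ) :
    (mk att ⁻¹' {Nat.pair i m} = {Nat.pair i (m+1)} ∧ ¬ big att i m) ∨
    (∃ w, w ≠ Nat.pair i (m+1) ∧
      mk att ⁻¹' {Nat.pair i m} = {Nat.pair i (m+1), w} ∧ big att i m) := by
  rw [fiber_eq]
  rcases m with _ | _ | m
  · by_cases hc : i % 2 = 0 ∨ att (i / 2) = false
    · right
      refine ⟨Nat.pair i 0, ?_, ?_, Or.inl ⟨rfl, hc⟩⟩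
      · intro h; rw [Nat.pair_eq_pair] at h; omega
      · ext x
        simp only [Set.mem_union, Set.mem_singleton_iff, Set.mem_setOf_eq, Set.mem_insert_iff]
        constructor
        · rintro ((h | ⟨h, -, -⟩) | ⟨j, -, -, -, h⟩) <;> first | exact Or.inl h | exact Or.inr h | omega
        · rintro (h | h)
          · exact Or.inl (Or.inl h)
          · exact Or.inl (Or.inr ⟨h, trivial, hc⟩)
    · left
      constructor
      · ext x
        simp only [Set.mem_union, Set.mem_singleton_iff, Set.mem_setOf_eq]
        constructor
        · rintro ((h | ⟨-, -, h⟩) | ⟨j, -, -, -, h⟩) <;> first | exact h | exact absurd h hc | omega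
        · exact fun h => Or.inl (Or.inl h)
      · rintro (⟨-, h⟩ | ⟨h, -⟩)
        · exact hc h
        · omega
  · by_cases hb : ∃ j, att j = true ∧ 2 * j.unpair.1 = i
    · obtain ⟨j₀, hj₀, hji⟩ := hb
      right
      refine ⟨Nat.pair (2*j₀+1) 0, ?_, ?_, Or.inr ⟨rfl, j₀, hj₀, hji⟩⟩
      · intro h; rw [Nat.pair_eq_pair] at h; omega
      · ext x
        simp only [Set.mem_union, Set.mem_singleton_iff, Set.mem_setOf_eq, Set.mem_insert_iff]
        constructor
        · rintro ((h | ⟨-, h, -⟩) | ⟨j, hx, hatt, hji', -⟩)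
          · exact Or.inl h
          · omega
          · have : j = j₀ := huniq j j₀ hatt hj₀ (by omega)
            subst this
            exact Or.inr hx
        · rintro (h | h)
          · exact Or.inl (Or.inl h)
          · exact Or.inr ⟨j₀, h, hj₀, hji, trivial⟩
    · left
      constructor
      · ext x
        simp only [Set.mem_union, Set.mem_singleton_iff, Set.mem_setOf_eq]
        constructor
        · rintro ((h | ⟨-, h, -⟩) | ⟨j, -, hatt, hji, -⟩)
          · exact h
          · omega
          · exact absurd ⟨j, hatt, hji⟩ hb
        · exact fun h => Or.inl (Or.inl h)
      · rintro (⟨h, -⟩ | ⟨-, h⟩)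
        · omega
        · exact hb h
  · left
    constructor
    · ext x
      simp only [Set.mem_union, Set.mem_singleton_iff, Set.mem_setOf_eq]
      constructor
      · rintro ((h | ⟨-, h, -⟩) | ⟨j, -, -, -, h⟩) <;> first | exact h | omega
      · exact fun h => Or.inl (Or.inl h)
    · rintro (⟨h, -⟩ | ⟨h, -⟩) <;> omega

lemma fiber_ncard (att : ℕ → Bool) (huniq : Uniq att) (y : ℕ) :
    (mk att ⁻¹' {y}).ncard = 1 ∨ (mk att ⁻¹' {y}).ncard = 2 := by
  have hy : y = Nat.pair y.unpair.1 y.unpair.2 := (Nat.pair_unpair y).symm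
  rw [hy]
  rcases fiber_spec att huniq y.unpair.1 y.unpair.2 with ⟨h, -⟩ | ⟨w, hw, h, -⟩
  · left; rw [h]; exact Set.ncard_singleton _
  · right; rw [h]; exact Set.ncard_pair (Ne.symm hw)

lemma fiber_ncard_two_iff (att : ℕ → Bool) (huniq : Uniq att) (i m : ℕ) :
    (mk att ⁻¹' {Nat.pair i m}).ncard = 2 ↔ big att i m := by
  rcases fiber_spec att huniq i m with ⟨h, hn⟩ | ⟨w, hw, h, hr⟩
  · rw [h, Set.ncard_singleton]
    exact iff_of_false (by omega) hn
  · rw [h, Set.ncard_pair (Ne.symm hw)]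
    exact iff_of_true rfl hr

/-! ### The two attachment functions -/

/-- attachment function for `f`: ray `j = pair e s` attaches iff `e` is even and `s = 0`. -/
def attF (j : ℕ) : Bool := decide (j.unpair.1 % 2 = 0 ∧ j.unpair.2 = 0)

/-- attachment function for `g`: ray `j = pair e s` attaches iff code `e` halts (on input 0)
at exactly step `s`. -/
def attG (j : ℕ) : Bool := halt j.unpair.1 j.unpair.2

lemma attF_iff {j : ℕ} : attF j = true ↔ j.unpair.1 % 2 = 0 ∧ j.unpair.2 = 0 := by
  simp [attF]

lemma uniqF : Uniq attF := by
  intro j j' hj hj' h1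
  rw [attF_iff] at hj hj'
  conv_lhs => rw [← Nat.pair_unpair j]
  conv_rhs => rw [← Nat.pair_unpair j']
  rw [h1, hj.2, hj'.2]

lemma uniqG : Uniq attG := by
  intro j j' hj hj' h1
  have h2 : j.unpair.2 = j'.unpair.2 := by
    refine halt_unique (e := j'.unpair.1) ?_ hj'
    rwa [← h1]
  conv_lhs => rw [← Nat.pair_unpair j]
  conv_rhs => rw [← Nat.pair_unpair j']
  rw [h1, h2]

/-! ### Computability -/

private lemma pu1 : Primrec fun x : ℕ => x.unpair.1 := Primrec.fst.comp Primrec.unpair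
private lemma pu2 : Primrec fun x : ℕ => x.unpair.2 := Primrec.snd.comp Primrec.unpair

lemma attF_primrec : Primrec attF := by
  have : PrimrecPred fun j : ℕ => j.unpair.1 % 2 = 0 ∧ j.unpair.2 = 0 := by
    refine PrimrecPred.and ?_ ?_
    · exact PrimrecRel.comp Primrec.eq (Primrec.nat_mod.comp pu1 (Primrec.const 2))
        (Primrec.const 0)
    · exact PrimrecRel.comp Primrec.eq pu2 (Primrec.const 0)
  exact this.decide

lemma attG_primrec : Primrec attG := by
  have hev : ∀ k : ℕ, Primrec fun j : ℕ =>
      (evaln (j.unpair.2 + k) (Denumerable.ofNat Code j.unpair.1) 0).isSome := by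
    intro k
    refine Primrec.option_isSome.comp ?_
    exact primrec_evaln.comp
      (((Primrec.nat_add.comp pu2 (Primrec.const k)).pair
        ((Primrec.ofNat Code).comp pu1)).pair (Primrec.const 0))
  have h1 := hev 1
  have h0 := hev 0
  have hnot : Primrec fun j : ℕ =>
      !(evaln (j.unpair.2 + 0) (Denumerable.ofNat Code j.unpair.1) 0).isSome :=
    Primrec.not.comp h0
  have := Primrec.and.comp h1 hnot
  exact this.of_eq fun j => by simp [attG, halt]

lemma mk_computable {att : ℕ → Bool} (hatt : Computable att) : Computable (mk att) := by
  have hA : Computable fun x : ℕ => Nat.pair (2 * ((x.unpair.1 / 2).unpair.1)) 1 :=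
    (Primrec₂.natPair.comp
      (Primrec.nat_mul.comp (Primrec.const 2)
        (Primrec.fst.comp (Primrec.unpair.comp (Primrec.nat_div.comp pu1 (Primrec.const 2)))))
      (Primrec.const 1)).to_comp
  have hB : Computable fun x : ℕ => Nat.pair x.unpair.1 (x.unpair.2 - 1) :=
    (Primrec₂.natPair.comp pu1 (Primrec.nat_sub.comp pu2 (Primrec.const 1))).to_comp
  have hcin : ComputablePred fun x : ℕ => att (x.unpair.1 / 2) = true := by
    refine ComputablePred.computable_iff.2 ⟨fun x => att (x.unpair.1 / 2), ?_, rfl⟩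
    exact hatt.comp (Primrec.nat_div.comp pu1 (Primrec.const 2)).to_comp
  have hin : Computable fun x : ℕ =>
      if att (x.unpair.1 / 2) = true then Nat.pair (2 * ((x.unpair.1 / 2).unpair.1)) 1 else x :=
    ComputablePred.ite hA Computable.id hcin
  have hcout : ComputablePred fun x : ℕ => x.unpair.1 % 2 = 1 ∧ x.unpair.2 = 0 := by
    have : PrimrecPred fun x : ℕ => x.unpair.1 % 2 = 1 ∧ x.unpair.2 = 0 :=
      PrimrecPred.and
        (PrimrecRel.comp Primrec.eq (Primrec.nat_mod.comp pu1 (Primrec.const 2))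
          (Primrec.const 1))
        (PrimrecRel.comp Primrec.eq pu2 (Primrec.const 0))
    exact ⟨inferInstance, this.decide.to_comp⟩
  exact ComputablePred.ite hin hB hcout

/-! ### The split-hair set of `f` is computable -/

/-- `big attF` as an explicitly decidable predicate. -/
def SfP (y : ℕ) : Prop :=
  (y.unpair.2 = 0 ∧ (y.unpair.1 % 2 = 0 ∨ attF (y.unpair.1 / 2) = false)) ∨
    (y.unpair.2 = 1 ∧ y.unpair.1 % 2 = 0 ∧ (y.unpair.1 / 2) % 2 = 0)

instance : DecidablePred SfP := fun y => by unfold SfP; infer_instance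

lemma existsF_iff (i : ℕ) :
    (∃ j, attF j = true ∧ 2 * j.unpair.1 = i) ↔ (i % 2 = 0 ∧ (i / 2) % 2 = 0) := by
  constructor
  · rintro ⟨j, hj, hji⟩
    rw [attF_iff] at hj
    constructor
    · omega
    · have : i / 2 = j.unpair.1 := by omega
      rw [this]; exact hj.1
  · rintro ⟨h1, h2⟩
    refine ⟨Nat.pair (i / 2) 0, ?_, ?_⟩
    · rw [attF_iff, Nat.unpair_pair]
      exact ⟨h2, rfl⟩
    · rw [Nat.unpair_pair]; omega

lemma SfP_iff (y : ℕ) : SfP y ↔ big attF y.unpair.1 y.unpair.2 := by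
  rw [SfP, big, existsF_iff]

lemma SfP_computable : ComputablePred SfP := by
  have h0 : PrimrecPred fun y : ℕ =>
      (y.unpair.2 = 0 ∧ (y.unpair.1 % 2 = 0 ∨ attF (y.unpair.1 / 2) = false)) ∨
      (y.unpair.2 = 1 ∧ y.unpair.1 % 2 = 0 ∧ (y.unpair.1 / 2) % 2 = 0) := by
    have e0 : ∀ (f : ℕ → ℕ) (k : ℕ), Primrec f → PrimrecPred fun y : ℕ => f y = k :=
      fun f k hf => PrimrecRel.comp Primrec.eq hf (Primrec.const k)
    refine PrimrecPred.or (PrimrecPred.and ?_ (PrimrecPred.or ?_ ?_)) 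
      (PrimrecPred.and ?_ (PrimrecPred.and ?_ ?_))
    · exact e0 _ 0 pu2
    · exact e0 _ 0 (Primrec.nat_mod.comp pu1 (Primrec.const 2))
    · exact PrimrecRel.comp Primrec.eq
        (attF_primrec.comp (Primrec.nat_div.comp pu1 (Primrec.const 2))) (Primrec.const false)
    · exact e0 _ 1 pu2
    · exact e0 _ 0 (Primrec.nat_mod.comp pu1 (Primrec.const 2))
    · exact e0 _ 0 (Primrec.nat_mod.comp (Primrec.nat_div.comp pu1 (Primrec.const 2))
        (Primrec.const 2))
  have : PrimrecPred SfP := h0.of_eq fun y => Iff.rfl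
  exact ⟨inferInstance, this.decide.to_comp⟩

/-- the `g`-structure codes `KS` into its split-hair set. -/
lemma bigG_iff (e : ℕ) : big attG (2 * e) 1 ↔ e ∈ KS := by
  rw [big]
  constructor
  · rintro (⟨h, -⟩ | ⟨-, j, hj, hji⟩)
    · omega
    · refine ⟨j.unpair.2, ?_⟩
      have : j.unpair.1 = e := by omega
      rw [← this]; exact hj
  · rintro ⟨s, hs⟩
    refine Or.inr ⟨rfl, Nat.pair e s, ?_, ?_⟩
    · rw [attG, Nat.unpair_pair]; exact hs
    · rw [Nat.unpair_pair]

/-! ### Building the (non-computable) isomorphism -/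

/-- Extend a bijection between two co-infinite subsets of `ℕ` to a bijection of `ℕ`. -/
lemma extend {A B : Set ℕ} (hA : Aᶜ.Infinite) (hB : Bᶜ.Infinite) {φ : ℕ → ℕ}
    (hφ : Set.BijOn φ A B) :
    ∃ ψ : ℕ → ℕ, Function.Bijective ψ ∧ (∀ x ∈ A, ψ x = φ x) ∧ (∀ x, x ∈ A ↔ ψ x ∈ B) := by
  classical
  haveI : Infinite ↥(Aᶜ) := Set.infinite_coe_iff.2 hA
  haveI : Infinite ↥(Bᶜ) := Set.infinite_coe_iff.2 hB
  obtain ⟨e⟩ : Nonempty (↥(Aᶜ) ≃ ↥(Bᶜ)) := nonempty_equiv_of_countable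
  refine ⟨fun x => if hx : x ∈ A then φ x else (e ⟨x, hx⟩ : ℕ), ⟨?_, ?_⟩, ?_, ?_⟩
  · intro x y hxy
    dsimp only at hxy
    by_cases hx : x ∈ A <;> by_cases hy : y ∈ A
    · rw [dif_pos hx, dif_pos hy] at hxy
      exact hφ.injOn hx hy hxy
    · rw [dif_pos hx, dif_neg hy] at hxy
      exact absurd (hxy ▸ hφ.mapsTo hx) (e ⟨y, hy⟩).2
    · rw [dif_neg hx, dif_pos hy] at hxy
      exact absurd (hxy ▸ hφ.mapsTo hy) (e ⟨x, hx⟩).2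
    · rw [dif_neg hx, dif_neg hy] at hxy
      have := e.injective (Subtype.coe_injective hxy)
      exact congrArg Subtype.val this
  · intro y
    by_cases hy : y ∈ B
    · obtain ⟨x, hxA, hxy⟩ := hφ.surjOn hy
      exact ⟨x, by dsimp only; rw [dif_pos hxA]; exact hxy⟩
    · refine ⟨(e.symm ⟨y, hy⟩ : ℕ), ?_⟩
      have hx : (e.symm ⟨y, hy⟩ : ℕ) ∉ A := (e.symm ⟨y, hy⟩).2
      dsimp only
      rw [dif_neg hx]
      have : e ⟨(e.symm ⟨y, hy⟩ : ℕ), hx⟩ = ⟨y, hy⟩ := by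
        rw [show (⟨(e.symm ⟨y, hy⟩ : ℕ), hx⟩ : ↥(Aᶜ)) = e.symm ⟨y, hy⟩ from rfl]
        exact e.apply_symm_apply _
      rw [this]
  · intro x hx
    dsimp only
    rw [dif_pos hx]
  · intro x
    dsimp only
    by_cases hx : x ∈ A
    · rw [dif_pos hx]
      exact ⟨fun _ => hφ.mapsTo hx, fun _ => hx⟩
    · rw [dif_neg hx]
      exact ⟨fun h => absurd h hx, fun h => absurd h (e ⟨x, hx⟩).2⟩

lemma exists_pi : ∃ π : ℕ → ℕ, Function.Bijective π ∧
    (∀ e, e % 2 = 0 → π e = Nat.nth (· ∈ KS) (e / 2)) ∧ (∀ e, e % 2 = 0 ↔ π e ∈ KS) := by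
  have hA : ({e : ℕ | e % 2 = 0} : Set ℕ)ᶜ.Infinite := by
    apply Set.infinite_of_injective_forall_mem (f := fun k : ℕ => 2 * k + 1)
    case hi => intro a b hab; dsimp only at hab; omega
    case hf => intro k; simp only [Set.mem_compl_iff, Set.mem_setOf_eq]; omega
  have hKSinf : (setOf (· ∈ KS)).Infinite := KS_infinite
  have hφ : Set.BijOn (fun e => Nat.nth (· ∈ KS) (e / 2)) {e : ℕ | e % 2 = 0} KS := by
    refine ⟨?_, ?_, ?_⟩
    · intro x _
      exact Nat.nth_mem_of_infinite hKSinf (x / 2)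
    · intro a ha b hb hab
      have := Nat.nth_injective hKSinf hab
      simp only [Set.mem_setOf_eq] at ha hb
      omega
    · intro b hb
      have : b ∈ Set.range (Nat.nth (· ∈ KS)) := by
        rw [Nat.range_nth_of_infinite hKSinf]; exact hb
      obtain ⟨k, hk⟩ := this
      refine ⟨2 * k, by simp only [Set.mem_setOf_eq]; omega, ?_⟩
      simpa [Nat.mul_div_cancel_left] using hk
  obtain ⟨π, h1, h2, h3⟩ := extend hA KS_compl_infinite hφ
  exact ⟨π, h1, fun e he => h2 e he, fun e => (h3 e).trans (by rfl)⟩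

/-- the halting time of (the code of) `e`. -/
noncomputable def tG (e : ℕ) : ℕ := sInf {s | halt e s = true}

lemma tG_spec {e : ℕ} (he : e ∈ KS) : halt e (tG e) = true := Nat.sInf_mem he

lemma exists_sigma (π : ℕ → ℕ) (hπ : Function.Bijective π)
    (hπKS : ∀ e, e % 2 = 0 ↔ π e ∈ KS) :
    ∃ σ : ℕ → ℕ, Function.Bijective σ ∧
      (∀ j, attF j = true → σ j = Nat.pair (π j.unpair.1) (tG (π j.unpair.1))) ∧
      (∀ j, attF j = true ↔ attG (σ j) = true) := by
  have hA : ({j : ℕ | attF j = true} : Set ℕ)ᶜ.Infinite := by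
    apply Set.infinite_of_injective_forall_mem (f := fun k : ℕ => Nat.pair k 1)
    case hi =>
      intro a b hab; dsimp only at hab; rw [Nat.pair_eq_pair] at hab; exact hab.1
    case hf =>
      intro k
      simp only [Set.mem_compl_iff, Set.mem_setOf_eq, attF_iff, Nat.unpair_pair]
      omega
  have hB : ({j : ℕ | attG j = true} : Set ℕ)ᶜ.Infinite := by
    apply Set.infinite_of_injective_forall_mem (f := fun k : ℕ => Nat.pair k (tG k + 1))
    case hi =>
      intro a b hab; dsimp only at hab; rw [Nat.pair_eq_pair] at hab; exact hab.1
    case hf =>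
      intro k
      simp only [Set.mem_compl_iff, Set.mem_setOf_eq, attG, Nat.unpair_pair]
      intro hcon
      have hk : k ∈ KS := ⟨_, hcon⟩
      have := halt_unique (tG_spec hk) hcon
      omega
  have hφ : Set.BijOn (fun j => Nat.pair (π j.unpair.1) (tG (π j.unpair.1)))
      {j : ℕ | attF j = true} {j : ℕ | attG j = true} := by
    refine ⟨?_, ?_, ?_⟩
    · intro j hj
      rw [Set.mem_setOf_eq, attF_iff] at hj
      have hmem : π j.unpair.1 ∈ KS := (hπKS j.unpair.1).1 hj.1
      simp only [Set.mem_setOf_eq, attG, Nat.unpair_pair]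
      exact tG_spec hmem
    · intro a ha b hb hab
      dsimp only at hab
      rw [Nat.pair_eq_pair] at hab
      have h1 : a.unpair.1 = b.unpair.1 := hπ.injective hab.1
      rw [Set.mem_setOf_eq, attF_iff] at ha hb
      conv_lhs => rw [← Nat.pair_unpair a]
      conv_rhs => rw [← Nat.pair_unpair b]
      rw [h1, ha.2, hb.2]
    · intro y hy
      rw [Set.mem_setOf_eq, attG] at hy
      have hy1 : y.unpair.1 ∈ KS := ⟨y.unpair.2, hy⟩
      obtain ⟨e, he⟩ := hπ.surjective y.unpair.1
      have heven : e % 2 = 0 := (hπKS e).2 (by rw [he]; exact hy1)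
      refine ⟨Nat.pair e 0, ?_, ?_⟩
      · rw [Set.mem_setOf_eq, attF_iff, Nat.unpair_pair]
        exact ⟨heven, rfl⟩
      · dsimp only
        rw [Nat.unpair_pair]
        have ht : tG (y.unpair.1) = y.unpair.2 := halt_unique (tG_spec hy1) hy
        rw [he, ht, Nat.pair_unpair]
  obtain ⟨σ, h1, h2, h3⟩ := extend hA hB hφ
  exact ⟨σ, h1, fun j hj => h2 j hj, fun j => (h3 j).trans (by rfl)⟩

/-- The isomorphism between the two structures, determined by a spine permutation `π`
and a ray permutation `σ`. -/
def hIso (π σ : ℕ → ℕ) (x : ℕ) : ℕ :=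
  if x.unpair.1 % 2 = 0 then Nat.pair (2 * π (x.unpair.1 / 2)) x.unpair.2
  else Nat.pair (2 * σ (x.unpair.1 / 2) + 1) x.unpair.2

lemma hIso_even {π σ : ℕ → ℕ} {a b : ℕ} (ha : a % 2 = 0) :
    hIso π σ (Nat.pair a b) = Nat.pair (2 * π (a / 2)) b := by
  simp [hIso, Nat.unpair_pair, ha]

lemma hIso_odd {π σ : ℕ → ℕ} {a b : ℕ} (ha : a % 2 = 1) :
    hIso π σ (Nat.pair a b) = Nat.pair (2 * σ (a / 2) + 1) b := by
  simp [hIso, Nat.unpair_pair, ha]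

lemma hIso_bijective (π σ : ℕ → ℕ) (hπ : Function.Bijective π) (hσ : Function.Bijective σ) :
    Function.Bijective (hIso π σ) := by
  constructor
  · intro x y hxy
    obtain ⟨a, b, rfl⟩ : ∃ a b, x = Nat.pair a b :=
      ⟨x.unpair.1, x.unpair.2, (Nat.pair_unpair x).symm⟩
    obtain ⟨c, d, rfl⟩ : ∃ c d, y = Nat.pair c d :=
      ⟨y.unpair.1, y.unpair.2, (Nat.pair_unpair y).symm⟩
    rcases Nat.mod_two_eq_zero_or_one a with ha | ha <;>
      rcases Nat.mod_two_eq_zero_or_one c with hc | hc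
    · rw [hIso_even ha, hIso_even hc, Nat.pair_eq_pair] at hxy
      have := hπ.injective (by omega : π (a / 2) = π (c / 2))
      rw [Nat.pair_eq_pair]
      omega
    · rw [hIso_even ha, hIso_odd hc, Nat.pair_eq_pair] at hxy
      omega
    · rw [hIso_odd ha, hIso_even hc, Nat.pair_eq_pair] at hxy
      omega
    · rw [hIso_odd ha, hIso_odd hc, Nat.pair_eq_pair] at hxy
      have := hσ.injective (by omega : σ (a / 2) = σ (c / 2))
      rw [Nat.pair_eq_pair]
      omega
  · intro y
    obtain ⟨i, m, rfl⟩ : ∃ i m, y = Nat.pair i m :=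
      ⟨y.unpair.1, y.unpair.2, (Nat.pair_unpair y).symm⟩
    rcases Nat.mod_two_eq_zero_or_one i with hi | hi
    · obtain ⟨e, he⟩ := hπ.surjective (i / 2)
      refine ⟨Nat.pair (2 * e) m, ?_⟩
      rw [hIso_even (by omega)]
      have h2 : 2 * e / 2 = e := by omega
      rw [h2, he]
      have : 2 * (i / 2) = i := by omega
      rw [this]
    · obtain ⟨e, he⟩ := hσ.surjective (i / 2)
      refine ⟨Nat.pair (2 * e + 1) m, ?_⟩
      rw [hIso_odd (by omega)]
      have h2 : (2 * e + 1) / 2 = e := by omega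
      rw [h2, he]
      have : 2 * (i / 2) + 1 = i := by omega
      rw [this]

lemma hIso_conj (π σ : ℕ → ℕ)
    (hσA : ∀ j, attF j = true → σ j = Nat.pair (π j.unpair.1) (tG (π j.unpair.1)))
    (hσiff : ∀ j, attF j = true ↔ attG (σ j) = true) :
    hIso π σ ∘ mk attF = mk attG ∘ hIso π σ := by
  funext x
  obtain ⟨a, b, rfl⟩ : ∃ a b, x = Nat.pair a b :=
    ⟨x.unpair.1, x.unpair.2, (Nat.pair_unpair x).symm⟩
  simp only [Function.comp_apply]
  rcases Nat.mod_two_eq_zero_or_one a with ha | ha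
  · rw [mk_even ha, hIso_even ha, hIso_even ha, mk_even (by omega)]
  · rcases b with _ | n
    · rcases hatt : attF (a / 2) with _ | _
      · rw [mk_odd_zero_f ha hatt, hIso_odd ha]
        have hG : attG ((2 * σ (a / 2) + 1) / 2) = false := by
          have h2 : (2 * σ (a / 2) + 1) / 2 = σ (a / 2) := by omega
          rw [h2]
          rcases hb : attG (σ (a / 2)) with _ | _
          · rfl
          · exact absurd ((hσiff (a / 2)).2 hb) (by rw [hatt]; simp)
        rw [mk_odd_zero_f (by omega) hG]
      · rw [mk_odd_zero_t ha hatt, hIso_odd ha]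
        have h2 : (2 * σ (a / 2) + 1) / 2 = σ (a / 2) := by omega
        have hG : attG ((2 * σ (a / 2) + 1) / 2) = true := by
          rw [h2]; exact (hσiff (a / 2)).1 hatt
        rw [mk_odd_zero_t (by omega) hG, h2, hσA (a / 2) hatt, Nat.unpair_pair]
        rw [hIso_even (by omega)]
        have h3 : 2 * ((a / 2).unpair.1) / 2 = (a / 2).unpair.1 := by omega
        rw [h3]
    · rw [mk_odd_pos ha (Nat.succ_ne_zero n), hIso_odd ha, hIso_odd ha,
        mk_odd_pos (by omega) (Nat.succ_ne_zero n)]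

end Stmt13

/-- There exist two isomorphic computable (2,1):1 structures that are not
computably isomorphic. -/
theorem stmt_13 :
    ∃ f g : ℕ → ℕ, Computable f ∧ Computable g ∧
      (∀ x : ℕ, (f ⁻¹' {x}).ncard = 1 ∨ (f ⁻¹' {x}).ncard = 2) ∧
      (∀ y : ℕ, (g ⁻¹' {y}).ncard = 1 ∨ (g ⁻¹' {y}).ncard = 2) ∧
      (∃ h : ℕ → ℕ, Function.Bijective h ∧ h ∘ f = g ∘ h) ∧
      (∀ h' : ℕ → ℕ, Computable h' → Function.Bijective h' → h' ∘ f ≠ g ∘ h') := by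
  classical
  obtain ⟨π, hπbij, -, hπKS⟩ := Stmt13.exists_pi
  obtain ⟨σ, hσbij, hσA, hσiff⟩ := Stmt13.exists_sigma π hπbij hπKS
  refine ⟨Stmt13.mk Stmt13.attF, Stmt13.mk Stmt13.attG,
    Stmt13.mk_computable Stmt13.attF_primrec.to_comp,
    Stmt13.mk_computable Stmt13.attG_primrec.to_comp,
    Stmt13.fiber_ncard _ Stmt13.uniqF,
    Stmt13.fiber_ncard _ Stmt13.uniqG,
    ⟨Stmt13.hIso π σ, Stmt13.hIso_bijective π σ hπbij hσbij,
      Stmt13.hIso_conj π σ hσA hσiff⟩, ?_⟩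
  intro h' hcomp hbij hconj
  have hc : ∀ z, h' (Stmt13.mk Stmt13.attF z) = Stmt13.mk Stmt13.attG (h' z) :=
    fun z => congrFun hconj z
  have hsurj : ∀ y, ∃ x, h' x = y := fun y => hbij.surjective y
  set inv : ℕ → ℕ := fun y => Nat.find (hsurj y) with hinvdef
  have hinv_spec : ∀ y, h' (inv y) = y := fun y => Nat.find_spec (hsurj y)
  -- the inverse of a computable bijection is computable
  have hinv_comp : Computable inv := by
    have hEq : Computable₂ (fun a b : ℕ => decide (a = b)) := (PrimrecRel.decide (Primrec.eq (α := ℕ))).to_comp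
    have hp : Computable₂ fun (y x : ℕ) => (decide (h' x = y) : Bool) :=
      hEq.comp (hcomp.comp Computable.snd) Computable.fst
    have hpart : Partrec fun y =>
        Nat.rfind (fun x => (Part.some (decide (h' x = y)) : Part Bool)) := by
      have := Partrec.rfind hp.partrec₂
      exact this
    refine hpart.of_eq_tot fun y => ?_
    refine Nat.mem_rfind.2 ?_
    constructor
    · rw [Part.mem_some_iff]
      simp [hinv_spec y]
    · intro m hm
      rw [Part.mem_some_iff]
      have : ¬ (h' m = y) := fun hcon => Nat.find_min (hsurj y) hm hcon
      simp [this]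
  -- conjugation preserves fiber cardinalities
  have htrans : ∀ y, (Stmt13.mk Stmt13.attG ⁻¹' {y}).ncard
      = (Stmt13.mk Stmt13.attF ⁻¹' {inv y}).ncard := by
    intro y
    have him : Stmt13.mk Stmt13.attG ⁻¹' {y}
        = h' '' (Stmt13.mk Stmt13.attF ⁻¹' {inv y}) := by
      ext z
      simp only [Set.mem_preimage, Set.mem_singleton_iff, Set.mem_image]
      constructor
      · intro hz
        obtain ⟨w, rfl⟩ := hsurj z
        refine ⟨w, ?_, rfl⟩
        apply hbij.injective
        rw [hc w, hz, hinv_spec]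
      · rintro ⟨w, hw, rfl⟩
        rw [← hc w, hw, hinv_spec]
    rw [him, Set.ncard_image_of_injective _ hbij.injective]
  -- hence membership in `KS` is decidable, contradiction
  apply Stmt13.KS_not_computable
  have hchar : ∀ e, e ∈ Stmt13.KS ↔ Stmt13.SfP (inv (Nat.pair (2 * e) 1)) := by
    intro e
    calc e ∈ Stmt13.KS ↔ Stmt13.big Stmt13.attG (2 * e) 1 := (Stmt13.bigG_iff e).symm
      _ ↔ (Stmt13.mk Stmt13.attG ⁻¹' {Nat.pair (2 * e) 1}).ncard = 2 :=
        (Stmt13.fiber_ncard_two_iff _ Stmt13.uniqG (2 * e) 1).symm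
      _ ↔ (Stmt13.mk Stmt13.attF ⁻¹' {inv (Nat.pair (2 * e) 1)}).ncard = 2 := by
        rw [htrans]
      _ ↔ Stmt13.big Stmt13.attF (inv (Nat.pair (2 * e) 1)).unpair.1
            (inv (Nat.pair (2 * e) 1)).unpair.2 := by
        have := Stmt13.fiber_ncard_two_iff _ Stmt13.uniqF
          (inv (Nat.pair (2 * e) 1)).unpair.1 (inv (Nat.pair (2 * e) 1)).unpair.2
        rw [Nat.pair_unpair] at this
        exact this
      _ ↔ Stmt13.SfP (inv (Nat.pair (2 * e) 1)) :=
        (Stmt13.SfP_iff (inv (Nat.pair (2 * e) 1))).symm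
  have hmap : Computable fun e : ℕ => inv (Nat.pair (2 * e) 1) :=
    hinv_comp.comp ((Primrec₂.natPair.comp
      (Primrec.nat_mul.comp (Primrec.const 2) Primrec.id) (Primrec.const 1)).to_comp)
  obtain ⟨χ, hχ, hχeq⟩ := ComputablePred.computable_iff.1 Stmt13.SfP_computable
  refine ComputablePred.computable_iff.2
    ⟨fun e => χ (inv (Nat.pair (2 * e) 1)), hχ.comp hmap, ?_⟩
  funext e
  exact propext ((hchar e).trans (iff_of_eq (congrFun hχeq _)))
end

section
/- Let (A, f) be a (2,1):1 structure and let c₁, ..., c_K be the distinct cyclic elements of a K-cycle (f(c_i) = c_{i+1}, indices mod K). Define the exclusive tree extree(c_i) = {a : ∃ n, f^[n](a) = c_i ∧ ∀ m < n, f^[m+K](a) ≠ f^[m](a)}. Then the exclusive trees extree(c₁), ..., extree(c_K) are pairwise disjoint and their union is the entire component of c₁. -/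
/-- In a (2,1):1 structure, the exclusive trees of the cyclic elements of a
K-cycle are pairwise disjoint and their union is the whole component. -/
theorem stmt_17 {A : Type*} (f : A → A)
    (hfib : ∀ a : A, (f ⁻¹' {a}).ncard = 1 ∨ (f ⁻¹' {a}).ncard = 2)
    (K : ℕ) (hK : 0 < K) (c : Fin K → A) (hinj : Function.Injective c)
    (hcycle : ∀ i : Fin K, f (c i) = c ⟨(i.val + 1) % K, Nat.mod_lt _ hK⟩) :
    (∀ i j : Fin K, i ≠ j →
      Disjoint {a : A | ∃ n : ℕ, f^[n] a = c i ∧ ∀ m < n, f^[m + K] a ≠ f^[m] a}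
        {a : A | ∃ n : ℕ, f^[n] a = c j ∧ ∀ m < n, f^[m + K] a ≠ f^[m] a}) ∧
    (⋃ i : Fin K, {a : A | ∃ n : ℕ, f^[n] a = c i ∧ ∀ m < n, f^[m + K] a ≠ f^[m] a}) =
      {a : A | ∃ m n : ℕ, f^[m] a = f^[n] (c ⟨0, hK⟩)} := by
  -- iterates on the cycle
  have hit : ∀ (n : ℕ) (i : Fin K), f^[n] (c i) = c ⟨(i.val + n) % K, Nat.mod_lt _ hK⟩ := by
    intro n
    induction n with
    | zero =>
      intro i
      simp only [Function.iterate_zero, id_eq, Nat.add_zero]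
      congr 1
      exact Fin.ext (Nat.mod_eq_of_lt i.isLt).symm
    | succ n ih =>
      intro i
      rw [Function.iterate_succ_apply, hcycle i, ih]
      congr 1
      apply Fin.ext
      show ((i.val + 1) % K + n) % K = (i.val + (n + 1)) % K
      rw [Nat.mod_add_mod]
      ring_nf
  have hper : ∀ i : Fin K, f^[K] (c i) = c i := by
    intro i
    rw [hit K i]
    congr 1
    exact Fin.ext (by simp [Nat.add_mod, Nat.mod_eq_of_lt i.isLt])
  constructor
  · intro i j hij
    rw [Set.disjoint_left]
    rintro a ⟨n₁, h₁, hm₁⟩ ⟨n₂, h₂, hm₂⟩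
    rcases lt_trichotomy n₁ n₂ with h | h | h
    · exact hm₂ n₁ h (by rw [Nat.add_comm, Function.iterate_add_apply, h₁, hper])
    · exact hij (hinj ((h ▸ h₁ : f^[n₂] a = c i).symm.trans h₂))
    · exact hm₁ n₂ h (by rw [Nat.add_comm, Function.iterate_add_apply, h₂, hper])
  · ext a
    simp only [Set.mem_iUnion, Set.mem_setOf_eq]
    constructor
    · rintro ⟨i, n, hn, -⟩
      refine ⟨n, i.val, ?_⟩
      rw [hit, hn]
      congr 1
      exact Fin.ext (by simp [Nat.mod_eq_of_lt i.isLt])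
    · rintro ⟨m, n, hmn⟩
      rw [hit] at hmn
      set j : Fin K := ⟨((⟨0, hK⟩ : Fin K).val + n) % K, Nat.mod_lt _ hK⟩ with hj
      have hS : ∃ k, f^[k + K] a = f^[k] a :=
        ⟨m, by rw [Nat.add_comm, Function.iterate_add_apply, hmn, hper]⟩
      classical
      set n₀ := Nat.find hS with hn₀
      have hfind : f^[n₀ + K] a = f^[n₀] a := Nat.find_spec hS
      have hmin : ∀ k < n₀, f^[k + K] a ≠ f^[k] a := fun k hk => Nat.find_min hS hk
      have hn₀m : n₀ ≤ m := by
        by_contra h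
        exact hmin m (lt_of_not_ge h) (by rw [Nat.add_comm, Function.iterate_add_apply, hmn, hper])
      obtain ⟨b, hb⟩ : ∃ b, b = f^[n₀] a := ⟨_, rfl⟩
      have hKb : f^[K] b = b := by
        rw [hb, ← Function.iterate_add_apply, Nat.add_comm]; exact hfind
      have hKtb : ∀ t, f^[K * t] b = b := by
        intro t
        induction t with
        | zero => simp
        | succ t ih =>
          rw [Nat.mul_succ, Function.iterate_add_apply, hKb, ih]
      set d := m - n₀ with hd
      have hdm : d + n₀ = m := by omega
      have hdb : f^[d] b = c j := by
        rw [hb, ← Function.iterate_add_apply, hdm, hmn]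
      have hdle : d ≤ K * (d + 1) := by nlinarith
      have hbc : b = c ⟨(j.val + (K * (d + 1) - d)) % K, Nat.mod_lt _ hK⟩ := by
        calc b = f^[K * (d + 1)] b := (hKtb (d + 1)).symm
        _ = f^[K * (d + 1) - d] (f^[d] b) := by
            rw [← Function.iterate_add_apply, Nat.sub_add_cancel hdle]
        _ = _ := by rw [hdb, hit]
      exact ⟨_, n₀, hb.symm.trans hbc, hmin⟩
end
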